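/- arXiv:2106.04706 — 7 statements merged into one kernel-verified Lean document; each statement's English description precedes it below -/
import Mathlib

section
/- Let a_1,...,a_M be real numbers and x_1 < x_2 < ... < x_M be distinct real numbers. If the function X(x) = sum_{j=1}^M a_j (x - x_j)/|x - x_j|^3, defined on the real line minus the points x_j, is not identically zero on each of the intervals determined by the x_j, then X has only finitely many zeros. More precisely: if not all a_j are zero, then the set {x in R \ {x_1,...,x_M} : X(x) = 0} is finite. -/
open Polynomial Finset in
theorem stmt_0 (M : ℕ) (a x : Fin M → ℝ) (hx : StrictMono x)
    (ha : ∃ j, a j ≠ 0) :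
    Set.Finite {t : ℝ | (∀ j, t ≠ x j) ∧
      ∑ j, a j * (t - x j) / |t - x j| ^ 3 = 0} := by
  obtain ⟨j₀, hj₀⟩ := ha
  set P : (Fin M → Bool) → ℝ[X] := fun ε =>
    ∑ j, C (a j * (if ε j then 1 else -1)) *
      ∏ k ∈ Finset.univ.erase j, (Polynomial.X - C (x k)) ^ 2 with hP
  have hPne : ∀ ε, P ε ≠ 0 := by
    intro ε h0
    have heval : (P ε).eval (x j₀) = 0 := by rw [h0]; simp
    rw [hP] at heval
    simp only [eval_finset_sum, eval_mul, eval_C, eval_prod, eval_pow, eval_sub, eval_X] at heval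
    rw [Finset.sum_eq_single j₀] at heval
    · rcases mul_eq_zero.1 heval with h | h
      · rcases mul_eq_zero.1 h with h | h
        · exact hj₀ h
        · split_ifs at h <;> norm_num at h
      · rcases Finset.prod_eq_zero_iff.1 h with ⟨k, hk, hk0⟩
        have : x j₀ = x k := by nlinarith [sq_nonneg (x j₀ - x k)]
        exact (Finset.mem_erase.1 hk).1 (hx.injective this.symm)
    · intro j _ hj
      apply mul_eq_zero_of_right
      apply Finset.prod_eq_zero (Finset.mem_erase.2 ⟨Ne.symm hj, Finset.mem_univ _⟩)
      simp
    · simp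
  have hsub : {t : ℝ | (∀ j, t ≠ x j) ∧
      ∑ j, a j * (t - x j) / |t - x j| ^ 3 = 0} ⊆
      ⋃ ε : Fin M → Bool, {t : ℝ | (P ε).IsRoot t} := by
    rintro t ⟨htne, hsum⟩
    refine Set.mem_iUnion.2 ⟨fun j => decide (x j < t), ?_⟩
    have key : (P (fun j => decide (x j < t))).eval t =
        (∑ j, a j * (t - x j) / |t - x j| ^ 3) * ∏ k, (t - x k) ^ 2 := by
      rw [hP, Finset.sum_mul]
      simp only [eval_finset_sum, eval_mul, eval_C, eval_prod, eval_pow, eval_sub, eval_X]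
      refine Finset.sum_congr rfl fun j _ => ?_
      have hu : t - x j ≠ 0 := sub_ne_zero.2 (htne j)
      have habs : |t - x j| ^ 3 = |t - x j| * (t - x j) ^ 2 := by
        rw [pow_succ' |t - x j| 2, sq_abs]
      have hsign : (if decide (x j < t) = true then (1:ℝ) else -1) * |t - x j| = t - x j := by
        rcases lt_trichotomy (x j) t with h | h | h
        · simp [h, abs_of_pos (sub_pos.2 h)]
        · exact absurd h.symm (htne j)
        · simp [not_lt.2 h.le, abs_of_neg (sub_neg.2 h)]
      have hprod : ∏ k, (t - x k) ^ 2 = (t - x j) ^ 2 * ∏ k ∈ Finset.univ.erase j, (t - x k) ^ 2 :=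
        (Finset.mul_prod_erase Finset.univ _ (Finset.mem_univ j)).symm
      have habsne : |t - x j| ≠ 0 := abs_ne_zero.2 hu
      set s : ℝ := (if decide (x j < t) = true then (1:ℝ) else -1) with hs
      rw [hprod, habs]
      field_simp
      linear_combination (a j * (∏ k ∈ Finset.univ.erase j, (t - x k) ^ 2)) * hsign
    exact show (P _).eval t = 0 by rw [key, hsum, zero_mul]
  exact Set.Finite.subset (Set.finite_iUnion fun ε => Polynomial.finite_setOf_isRoot (hPne ε)) hsub
end

section
/- For every integer L >= 1, the polynomial P_L (of degree L+1) appearing in A_L(x) = P_L(x)/(1+x^2)^{(2L+3)/2}, where A_L is the L-th derivative of x/(1+x^2)^{3/2}, has L+1 distinct real zeros, and the zeros of P_L and P_{L-1} strictly interlace. -/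
open Polynomial Set Filter Real


open Polynomial

noncomputable def myQ : ℕ → Polynomial ℝ
  | 0 => X
  | (k+1) => (1 + X ^ 2) * (myQ k).derivative - C (2 * (k:ℝ) + 3) * X * myQ k

lemma myQ_deg : ∀ k : ℕ, (myQ k).natDegree = k + 1 ∧
    (myQ k).leadingCoeff = (-1)^k * (Nat.factorial (k+1) : ℝ) := by
  intro k
  induction k with
  | zero => constructor <;> simp [myQ]
  | succ k ih =>
    obtain ⟨hd, hl⟩ := ih
    have hco : (myQ (k+1)).coeff (k+2) = -((k:ℝ)+2) * (myQ k).coeff (k+1) := by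
      have h3 : (myQ k).coeff (k+3) = 0 :=
        coeff_eq_zero_of_natDegree_lt (by omega)
      simp only [myQ, coeff_sub, add_mul, one_mul, coeff_add, mul_assoc, coeff_C_mul]
      rw [show k+2 = (k+1)+1 from rfl, coeff_X_mul]
      rw [show X ^ 2 * (myQ k).derivative = (myQ k).derivative * X ^ 2 from mul_comm _ _]
      rw [show (k+1)+1 = k+2 from rfl, coeff_mul_X_pow']
      simp [coeff_derivative, h3]
      ring
    have hlc1 : (myQ k).coeff (k+1) = (-1)^k * (Nat.factorial (k+1) : ℝ) := by
      have := hl; rwa [leadingCoeff, hd] at this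
    have hf : (Nat.factorial (k+1) : ℝ) ≠ 0 := by
      exact_mod_cast (Nat.factorial_pos _).ne'
    have hne : (myQ (k+1)).coeff (k+2) ≠ 0 := by
      rw [hco, hlc1]
      exact mul_ne_zero (neg_ne_zero.2 (by positivity))
        (mul_ne_zero (pow_ne_zero _ (by norm_num)) hf)
    have hdle : (myQ (k+1)).natDegree ≤ k + 2 := by
      have h1 : ((1 + X ^ 2 : Polynomial ℝ) * (myQ k).derivative).natDegree ≤ k + 2 := by
        refine (natDegree_mul_le).trans ?_
        have : (1 + X ^ 2 : Polynomial ℝ).natDegree ≤ 2 :=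
          (natDegree_add_le _ _).trans (by simp)
        have h2 : (myQ k).derivative.natDegree ≤ k := by
          refine (natDegree_derivative_le _).trans (by omega)
        omega
      have h2 : ((C (2 * (k:ℝ) + 3) * X * myQ k)).natDegree ≤ k + 2 := by
        refine (natDegree_mul_le).trans ?_
        have h3 : (C (2 * (k:ℝ) + 3) * X).natDegree ≤ 0 + 1 :=
          natDegree_mul_le.trans (add_le_add (natDegree_C _).le natDegree_X_le)
        omega
      have hrfl : myQ (k+1)
          = (1 + X ^ 2) * (myQ k).derivative - C (2 * (k:ℝ) + 3) * X * myQ k := rfl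
      rw [hrfl]
      exact (natDegree_sub_le _ _).trans (max_le h1 h2)
    have hdeq : (myQ (k+1)).natDegree = k+2 := le_antisymm hdle (le_natDegree_of_ne_zero hne)
    refine ⟨hdeq, ?_⟩
    have hfs : (Nat.factorial (k+1+1) : ℝ) = ((k:ℝ)+2) * (Nat.factorial (k+1) : ℝ) := by
      rw [Nat.factorial_succ]; push_cast; ring
    rw [leadingCoeff, hdeq, hco, hlc1, hfs]
    ring


open Polynomial Set

lemma ivt_root (p : Polynomial ℝ) {a b : ℝ} (hab : a < b)
    (h : p.eval a * p.eval b < 0) : ∃ c, a < c ∧ c < b ∧ p.eval c = 0 := by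
  have hc : ContinuousOn (fun x => p.eval x) (Icc a b) := p.continuous.continuousOn
  rcases lt_or_ge (p.eval a) 0 with ha | ha
  · have hb : 0 < p.eval b := by nlinarith
    have h0 : (0:ℝ) ∈ Ioo (p.eval a) (p.eval b) := ⟨ha, hb⟩
    obtain ⟨c, hc1, hc2⟩ := intermediate_value_Ioo hab.le hc h0
    exact ⟨c, hc1.1, hc1.2, hc2⟩
  · have ha' : 0 < p.eval a := by
      rcases ha.lt_or_eq with h' | h'
      · exact h'
      · exfalso; rw [← h', zero_mul] at h; exact lt_irrefl 0 h
    have hb : p.eval b < 0 := by nlinarith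
    have h0 : (0:ℝ) ∈ Ioo (p.eval b) (p.eval a) := ⟨hb, ha'⟩
    obtain ⟨c, hc1, hc2⟩ := intermediate_value_Ioo' hab.le hc h0
    exact ⟨c, hc1.1, hc1.2, hc2⟩

lemma sign_const (p : Polynomial ℝ) {a b x y : ℝ}
    (hnr : ∀ t, a < t → t < b → p.eval t ≠ 0)
    (hx : a < x) (hx' : x < b) (hy : a < y) (hy' : y < b) :
    0 < p.eval x * p.eval y := by
  rcases lt_trichotomy x y with h | h | h
  · by_contra hle
    have : p.eval x * p.eval y < 0 := by
      rcases (not_lt.mp hle).lt_or_eq with h'|h'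
      · exact h'
      · exact absurd (mul_eq_zero.mp h')
          (by push_neg; exact ⟨hnr x hx hx', hnr y hy hy'⟩)
    obtain ⟨c, h1, h2, h3⟩ := ivt_root p h this
    exact hnr c (hx.trans h1) (h2.trans hy') h3
  · subst h
    exact mul_self_pos.mpr (hnr x hx hx')
  · by_contra hle
    have : p.eval y * p.eval x < 0 := by
      rcases (not_lt.mp hle).lt_or_eq with h'|h'
      · nlinarith
      · exact absurd (mul_eq_zero.mp h')
          (by push_neg; exact ⟨hnr x hx hx', hnr y hy hy'⟩)
    obtain ⟨c, h1, h2, h3⟩ := ivt_root p h this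
    exact hnr c (hy.trans h1) (h2.trans hx') h3

lemma factor_root (p : Polynomial ℝ) (z : ℝ) (hz : p.eval z = 0) :
    ∃ q : Polynomial ℝ, p = (X - C z) * q ∧ q.eval z = p.derivative.eval z := by
  refine ⟨p /ₘ (X - C z), ((mul_divByMonic_eq_iff_isRoot (p := p) (a := z)).mpr hz).symm, ?_⟩
  have h := (mul_divByMonic_eq_iff_isRoot (p := p) (a := z)).mpr hz
  conv_rhs => rw [← h]
  simp [derivative_mul]

lemma near_right (p : Polynomial ℝ) {z y : ℝ} (hzy : z < y) (hz : p.eval z = 0)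
    (hD : p.derivative.eval z ≠ 0) :
    ∃ x, z < x ∧ x < y ∧ 0 < p.eval x * p.derivative.eval z := by
  obtain ⟨q, hq, hqz⟩ := factor_root p z hz
  have hcont : ContinuousAt (fun x => q.eval x) z := q.continuous.continuousAt
  have hqz0 : q.eval z ≠ 0 := by rwa [hqz]
  obtain ⟨δ, hδ, hball⟩ := Metric.continuousAt_iff.mp hcont |q.eval z| (abs_pos.mpr hqz0)
  set x := min (z + δ/2) ((z + y)/2) with hx
  have hx1 : z < x := by apply lt_min <;> [linarith; linarith]
  have hx2 : x < y := min_le_right _ _ |>.trans_lt (by linarith)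
  have hxd : dist x z < δ := by
    rw [Real.dist_eq, abs_lt]
    constructor
    · have := hx1; linarith
    · have : x ≤ z + δ/2 := min_le_left _ _
      linarith
  have hq0 : 0 < q.eval x * q.eval z := by
    have := hball hxd
    rw [Real.dist_eq] at this
    rcases lt_or_ge 0 (q.eval z) with h | h
    · have : 0 < q.eval x := by cases abs_lt.mp this; nlinarith [abs_of_pos h]
      positivity
    · have hneg : q.eval z < 0 := h.lt_of_ne (by simpa using hqz0)
      have : q.eval x < 0 := by cases abs_lt.mp this; nlinarith [abs_of_neg hneg]
      nlinarith
  refine ⟨x, hx1, hx2, ?_⟩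
  rw [← hqz, hq]
  simp only [eval_mul, eval_sub, eval_X, eval_C]
  nlinarith

lemma near_left (p : Polynomial ℝ) {z y : ℝ} (hyz : y < z) (hz : p.eval z = 0)
    (hD : p.derivative.eval z ≠ 0) :
    ∃ x, y < x ∧ x < z ∧ p.eval x * p.derivative.eval z < 0 := by
  obtain ⟨q, hq, hqz⟩ := factor_root p z hz
  have hcont : ContinuousAt (fun x => q.eval x) z := q.continuous.continuousAt
  have hqz0 : q.eval z ≠ 0 := by rwa [hqz]
  obtain ⟨δ, hδ, hball⟩ := Metric.continuousAt_iff.mp hcont |q.eval z| (abs_pos.mpr hqz0)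
  set x := max (z - δ/2) ((z + y)/2) with hx
  have hx1 : x < z := by apply max_lt <;> [linarith; linarith]
  have hx2 : y < x := lt_of_lt_of_le (by linarith) (le_max_right _ _)
  have hxd : dist x z < δ := by
    rw [Real.dist_eq, abs_lt]
    constructor
    · have : z - δ/2 ≤ x := le_max_left _ _
      linarith
    · linarith
  have hq0 : 0 < q.eval x * q.eval z := by
    have := hball hxd
    rw [Real.dist_eq] at this
    rcases lt_or_ge 0 (q.eval z) with h | h
    · have : 0 < q.eval x := by cases abs_lt.mp this; nlinarith [abs_of_pos h]
      positivity
    · have hneg : q.eval z < 0 := h.lt_of_ne (by simpa using hqz0)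
      have : q.eval x < 0 := by cases abs_lt.mp this; nlinarith [abs_of_neg hneg]
      nlinarith
  refine ⟨x, hx2, hx1, ?_⟩
  rw [← hqz, hq]
  simp only [eval_mul, eval_sub, eval_X, eval_C]
  nlinarith


open Polynomial Set Filter

lemma tail_right (p : Polynomial ℝ) (hd : 0 < p.degree) (a : ℝ) :
    ∃ b, a < b ∧ 0 < p.eval b * p.leadingCoeff := by
  have hp0 : p ≠ 0 := fun h => by simp [h] at hd
  have hlc : p.leadingCoeff ≠ 0 := leadingCoeff_ne_zero.mpr hp0
  rcases hlc.lt_or_gt with h | h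
  · have ht := p.tendsto_atBot_of_leadingCoeff_nonpos hd h.le
    have : ∀ᶠ x in atTop, p.eval x < 0 := ht.eventually_lt_atBot 0
    obtain ⟨b, hb1, hb2⟩ := (this.and (eventually_gt_atTop a)).exists
    exact ⟨b, hb2, mul_pos_of_neg_of_neg hb1 h⟩
  · have ht := p.tendsto_atTop_of_leadingCoeff_nonneg hd h.le
    have : ∀ᶠ x in atTop, 0 < p.eval x := ht.eventually_gt_atTop 0
    obtain ⟨b, hb1, hb2⟩ := (this.and (eventually_gt_atTop a)).exists
    exact ⟨b, hb2, mul_pos hb1 h⟩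

lemma tail_left (p : Polynomial ℝ) (hd : 0 < p.degree) (a : ℝ) :
    ∃ b, b < a ∧ 0 < p.eval b * (p.leadingCoeff * (-1)^p.natDegree) := by
  have hp0 : p ≠ 0 := fun h => by simp [h] at hd
  set q : Polynomial ℝ := p.comp (-X) with hqdef
  have hnd : q.natDegree = p.natDegree := by
    rw [natDegree_comp]; simp
  have hq0 : q ≠ 0 := by
    intro h
    have : p.natDegree ≠ 0 := by
      have := natDegree_pos_iff_degree_pos.mpr hd; omega
    rw [hqdef] at h
    have := natDegree_comp (p := p) (q := (-X : Polynomial ℝ))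
    rw [h] at this
    simp at this
    omega
  have hlcq : q.leadingCoeff = p.leadingCoeff * (-1)^p.natDegree := by
    rw [hqdef, leadingCoeff_comp (by simp)]
    simp
  have hdq : 0 < q.degree := by
    rw [degree_eq_natDegree hq0, hnd]
    exact_mod_cast natDegree_pos_iff_degree_pos.mpr hd
  obtain ⟨b, hb1, hb2⟩ := tail_right q hdq (-a)
  refine ⟨-b, by linarith, ?_⟩
  rwa [hqdef, eval_comp, eval_neg, eval_X, hlcq] at hb2

lemma sgn_trans_pos {a b c : ℝ} (h1 : 0 < a*b) (h2 : 0 < b*c) : 0 < a*c := by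
  nlinarith [mul_pos h1 h2, sq_nonneg b]
lemma sgn_trans_neg {a b c : ℝ} (h1 : 0 < a*b) (h2 : b*c < 0) : a*c < 0 := by
  nlinarith [mul_pos h1 (neg_pos.mpr h2), sq_nonneg b]
lemma sgn_comm_pos {a b : ℝ} (h : 0 < a*b) : 0 < b*a := by rwa [mul_comm]
lemma sgn_comm_neg {a b : ℝ} (h : a*b < 0) : b*a < 0 := by rwa [mul_comm]
lemma sgn_scale_pos {a b d : ℝ} (hd : 0 < d) (h : 0 < a*(d*b)) : 0 < a*b := by nlinarith
lemma sgn_scale_neg {a b d : ℝ} (hd : 0 < d) (h : a*(d*b) < 0) : a*b < 0 := by nlinarith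
lemma sgn_neg_mul {a b : ℝ} (h : 0 < a * -b) : a*b < 0 := by nlinarith
lemma sgn_mulL {a b c : ℝ} (hc : 0 < c) (h : a*b < 0) : (c*a)*b < 0 := by nlinarith
lemma sgn_mulR {a b c : ℝ} (hc : 0 < c) (h : a*b < 0) : a*(c*b) < 0 := by nlinarith
lemma sgn_mul2 {a b c e : ℝ} (hc : 0 < c) (he : 0 < e) (h : a*b < 0) :
    (c*a)*(e*b) < 0 := by nlinarith [mul_pos hc he, mul_pos (mul_pos hc he) (neg_pos.mpr h)]

lemma step_lemma (n : ℕ) (p P : Polynomial ℝ) (c d : ℝ) (hd0 : 0 < d)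
    (hdp : p.natDegree = n + 1) (hdP : P.natDegree = n + 2)
    (hlcP : P.leadingCoeff = -(d * p.leadingCoeff))
    (hrel : P = (1 + X ^ 2) * p.derivative - C c * X * p)
    (w : Fin (n+1) → ℝ) (hw : StrictMono w)
    (hroots : ∀ t, p.eval t = 0 ↔ ∃ i, t = w i) :
    ∃ z : Fin (n+2) → ℝ, StrictMono z ∧ (∀ t, P.eval t = 0 ↔ ∃ i, t = z i) ∧
      ∀ i : Fin (n+1), z i.castSucc < w i ∧ w i < z i.succ := by
  have hp0 : p ≠ 0 := fun h => by simp [h] at hdp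
  have hP0 : P ≠ 0 := fun h => by simp [h] at hdP
  have hdegp : 0 < p.degree := natDegree_pos_iff_degree_pos.mp (by omega)
  have hdegP : 0 < P.degree := natDegree_pos_iff_degree_pos.mp (by omega)
  have hlc : p.leadingCoeff ≠ 0 := leadingCoeff_ne_zero.mpr hp0
  have hwroot : ∀ i, p.eval (w i) = 0 := fun i => (hroots _).mpr ⟨i, rfl⟩
  -- simple roots
  have hD0 : ∀ i, p.derivative.eval (w i) ≠ 0 := by
    intro i hDi
    obtain ⟨q, hq, hqz⟩ := factor_root p (w i) (hwroot i)
    have hq0 : q ≠ 0 := fun h => hp0 (by rw [hq, h, mul_zero])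
    have hndq : q.natDegree = n := by
      have := natDegree_mul (X_sub_C_ne_zero (w i)) hq0
      rw [← hq, natDegree_X_sub_C, hdp] at this
      omega
    have hqall : ∀ j : Fin (n+1), q.eval (w j) = 0 := by
      intro j
      rcases eq_or_ne j i with rfl | hji
      · rw [hqz]; exact hDi
      · have hpj := hwroot j
        rw [hq] at hpj
        simp only [eval_mul, eval_sub, eval_X, eval_C] at hpj
        rcases mul_eq_zero.mp hpj with h | h
        · exact absurd (by linarith : w j = w i) (fun hh => hji (hw.injective hh))
        · exact h
    have : q = 0 := by
      apply Polynomial.eq_zero_of_natDegree_lt_card_of_eval_eq_zero q hw.injective hqall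
      rw [hndq, Fintype.card_fin]
      omega
    exact hq0 this
  have hPw : ∀ i, P.eval (w i) = (1 + (w i)^2) * p.derivative.eval (w i) := by
    intro i
    rw [hrel]
    simp only [eval_sub, eval_mul, eval_add, eval_one, eval_pow, eval_X, eval_C, hwroot i]
    ring
  -- no roots outside / between
  have hnrR : ∀ t, w (Fin.last n) < t → p.eval t ≠ 0 := by
    intro t ht h
    obtain ⟨j, rfl⟩ := (hroots t).mp h
    exact absurd ht (not_lt.mpr (hw.monotone (Fin.le_last j)))
  have hnrL : ∀ t, t < w 0 → p.eval t ≠ 0 := by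
    intro t ht h
    obtain ⟨j, rfl⟩ := (hroots t).mp h
    exact absurd ht (not_lt.mpr (hw.monotone (Fin.zero_le j)))
  have hnrM : ∀ (i : Fin n) (t : ℝ), w i.castSucc < t → t < w i.succ → p.eval t ≠ 0 := by
    intro i t h1 h2 h
    obtain ⟨j, rfl⟩ := (hroots t).mp h
    have hj1 : i.castSucc < j := hw.lt_iff_lt.mp h1
    have hj2 : j < i.succ := hw.lt_iff_lt.mp h2
    have := Fin.castSucc_lt_iff_succ_le.mp hj1
    exact absurd hj2 (not_lt.mpr this)
  -- right outer root
  obtain ⟨b₁, hb₁, hb₁p⟩ := tail_right p hdegp (w (Fin.last n))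
  obtain ⟨x₁, hx₁a, hx₁b, hx₁s⟩ := near_right p hb₁ (hwroot _) (hD0 (Fin.last n))
  have hsc₁ : 0 < p.eval x₁ * p.eval b₁ :=
    sign_const p (a := w (Fin.last n)) (b := b₁+1) (fun t h1 _ => hnrR t h1)
      hx₁a (by linarith) (by linarith) (by linarith)
  have hDlc : 0 < p.derivative.eval (w (Fin.last n)) * p.leadingCoeff :=
    sgn_trans_pos (sgn_trans_pos (sgn_comm_pos hx₁s) hsc₁) hb₁p
  obtain ⟨b₂, hb₂, hb₂p⟩ := tail_right P hdegP (w (Fin.last n))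
  rw [hlcP] at hb₂p
  have hb₂lc : P.eval b₂ * p.leadingCoeff < 0 :=
    sgn_scale_neg hd0 (sgn_neg_mul hb₂p)
  have hPlast : P.eval (w (Fin.last n)) * P.eval b₂ < 0 := by
    rw [hPw]
    exact sgn_mulL (by positivity) (sgn_trans_neg hDlc (sgn_comm_neg hb₂lc))
  obtain ⟨zR, hzR1, hzR2, hzR3⟩ := ivt_root P hb₂ hPlast
  -- left outer root
  obtain ⟨b₃, hb₃, hb₃p⟩ := tail_left p hdegp (w 0)
  obtain ⟨x₂, hx₂a, hx₂b, hx₂s⟩ := near_left p hb₃ (hwroot 0) (hD0 0)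
  have hsc₂ : 0 < p.eval b₃ * p.eval x₂ :=
    sign_const p (a := b₃-1) (b := w 0) (fun t _ h2 => hnrL t h2)
      (by linarith) (by linarith) (by linarith) hx₂b
  have hDA : (p.leadingCoeff * (-1)^p.natDegree) * p.derivative.eval (w 0) < 0 :=
    sgn_trans_neg (sgn_trans_pos (sgn_comm_pos hb₃p) hsc₂) hx₂s
  obtain ⟨b₄, hb₄, hb₄p⟩ := tail_left P hdegP (w 0)
  have hA : P.leadingCoeff * (-1)^P.natDegree
      = d * (p.leadingCoeff * (-1)^p.natDegree) := by
    rw [hlcP, hdP, hdp, pow_succ]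
    ring
  rw [hA] at hb₄p
  have hb₄A : 0 < P.eval b₄ * (p.leadingCoeff * (-1)^p.natDegree) :=
    sgn_scale_pos hd0 hb₄p
  have hPfirst : P.eval b₄ * P.eval (w 0) < 0 := by
    rw [hPw]
    exact sgn_mulR (by positivity) (sgn_trans_neg hb₄A hDA)
  obtain ⟨zL, hzL1, hzL2, hzL3⟩ := ivt_root P hb₄ hPfirst
  -- interior roots
  have hmid : ∀ i : Fin n, ∃ x, w i.castSucc < x ∧ x < w i.succ ∧ P.eval x = 0 := by
    intro i
    have hz12 : w i.castSucc < w i.succ := hw Fin.castSucc_lt_succ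
    obtain ⟨y₁, hy₁a, hy₁b, hy₁s⟩ := near_right p hz12 (hwroot _) (hD0 i.castSucc)
    obtain ⟨y₂, hy₂a, hy₂b, hy₂s⟩ := near_left p hz12 (hwroot _) (hD0 i.succ)
    have hsc : 0 < p.eval y₁ * p.eval y₂ :=
      sign_const p (hnrM i) hy₁a hy₁b hy₂a hy₂b
    have hDD : p.derivative.eval (w i.castSucc) * p.derivative.eval (w i.succ) < 0 :=
      sgn_trans_neg (sgn_trans_pos (sgn_comm_pos hy₁s) hsc) hy₂s
    have hPP : P.eval (w i.castSucc) * P.eval (w i.succ) < 0 := by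
      rw [hPw, hPw]
      exact sgn_mul2 (by positivity) (by positivity) hDD
    exact ivt_root P hz12 hPP
  choose ζ hζ1 hζ2 hζ3 using hmid
  -- assemble
  set z : Fin (n+2) → ℝ := Fin.cons zL (Fin.snoc ζ zR) with hzdef
  have hza : ∀ i : Fin (n+1), w i < z i.succ := by
    intro i
    rw [hzdef, Fin.cons_succ]
    refine Fin.lastCases ?_ ?_ i
    · rw [Fin.snoc_last]; exact hzR1
    · intro j; rw [Fin.snoc_castSucc]; exact hζ1 j
  have hzb : ∀ i : Fin (n+1), z i.castSucc < w i := by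
    intro i
    refine Fin.cases ?_ ?_ i
    · rw [hzdef, Fin.castSucc_zero, Fin.cons_zero]; exact hzL2
    · intro j
      rw [hzdef, ← Fin.succ_castSucc, Fin.cons_succ, Fin.snoc_castSucc]
      exact hζ2 j
  have hmono : StrictMono z := by
    rw [Fin.strictMono_iff_lt_succ]
    intro i
    exact (hzb i).trans (hza i)
  have hzroot : ∀ j : Fin (n+2), P.eval (z j) = 0 := by
    intro j
    refine Fin.cases ?_ ?_ j
    · rw [hzdef, Fin.cons_zero]; exact hzL3
    · intro i
      rw [hzdef, Fin.cons_succ]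
      refine Fin.lastCases ?_ ?_ i
      · rw [Fin.snoc_last]; exact hzR3
      · intro j'; rw [Fin.snoc_castSucc]; exact hζ3 j'
  refine ⟨z, hmono, ?_, fun i => ⟨hzb i, hza i⟩⟩
  intro t
  constructor
  · intro ht
    by_contra hnot
    push_neg at hnot
    have htmem : t ∉ Finset.image z Finset.univ := by
      simp only [Finset.mem_image, Finset.mem_univ, true_and]
      exact fun ⟨i, hi⟩ => hnot i hi.symm
    have hcard : (insert t (Finset.image z Finset.univ)).card = n + 3 := by
      rw [Finset.card_insert_of_notMem htmem,
        Finset.card_image_of_injective _ hmono.injective, Finset.card_univ,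
        Fintype.card_fin]
    have : P = 0 := by
      apply Polynomial.eq_zero_of_natDegree_lt_card_of_eval_eq_zero' P
        (insert t (Finset.image z Finset.univ))
      · intro i hi
        rcases Finset.mem_insert.mp hi with rfl | hi
        · exact ht
        · obtain ⟨j, _, rfl⟩ := Finset.mem_image.mp hi
          exact hzroot j
      · rw [hcard, hdP]; omega
    exact hP0 this
  · rintro ⟨i, rfl⟩
    exact hzroot i

lemma myA_deriv (k : ℕ) (x : ℝ) :
    HasDerivAt (fun y : ℝ => (myQ k).eval y * (1 + y^2) ^ (-(2*(k:ℝ)+3)/2))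
      ((myQ (k+1)).eval x * (1 + x^2) ^ (-(2*((k:ℝ)+1)+3)/2)) x := by
  set e : ℝ := -(2*(k:ℝ)+3)/2 with he
  have hpos : (0:ℝ) < 1 + x^2 := by positivity
  have hb : HasDerivAt (fun y : ℝ => 1 + y^2) (2*x) x := by
    simpa using ((hasDerivAt_pow 2 x).const_add 1)
  have hr : HasDerivAt (fun y : ℝ => y ^ e) (e * (1+x^2) ^ (e-1)) (1+x^2) :=
    Real.hasDerivAt_rpow_const (Or.inl hpos.ne')
  have hg : HasDerivAt (fun y : ℝ => (1 + y^2) ^ e) (e * (1+x^2) ^ (e-1) * (2*x)) x :=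
    by have := hr.comp x hb; exact this
  have hp : HasDerivAt (fun y : ℝ => (myQ k).eval y) ((myQ k).derivative.eval x) x :=
    (myQ k).hasDerivAt x
  have := hp.mul hg
  refine HasDerivAt.congr_deriv this ?_
  have hsplit : (1+x^2) ^ e = (1+x^2) ^ (e-1) * (1+x^2) := by
    rw [← Real.rpow_add_one hpos.ne' (e-1)]; ring_nf
  have heval : (myQ (k+1)).eval x
      = (1 + x^2) * (myQ k).derivative.eval x - (2*(k:ℝ)+3) * x * (myQ k).eval x := by
    simp [myQ]
  have hee : -(2*((k:ℝ)+1)+3)/2 = e - 1 := by rw [he]; ring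
  rw [heval, hee, hsplit]
  ring

lemma myA_formula (k : ℕ) (x : ℝ) :
    iteratedDeriv k (fun t : ℝ => t / (1 + t ^ 2) ^ ((3:ℝ)/2)) x
      = (myQ k).eval x * (1 + x^2) ^ (-(2*(k:ℝ)+3)/2) := by
  induction k generalizing x with
  | zero =>
    have hpos : (0:ℝ) < 1 + x^2 := by positivity
    simp only [iteratedDeriv_zero, myQ, eval_X]
    rw [div_eq_mul_inv, ← Real.rpow_neg hpos.le]
    norm_num
  | succ k ih =>
    rw [iteratedDeriv_succ]
    have hfun : iteratedDeriv k (fun t : ℝ => t / (1 + t ^ 2) ^ ((3:ℝ)/2))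
        = fun y : ℝ => (myQ k).eval y * (1 + y^2) ^ (-(2*(k:ℝ)+3)/2) := funext ih
    rw [hfun, (myA_deriv k x).deriv]
    push_cast
    ring_nf

lemma myQ_lc_step (k : ℕ) : (myQ (k+1)).leadingCoeff = -(((k:ℝ)+2) * (myQ k).leadingCoeff) := by
  rw [(myQ_deg (k+1)).2, (myQ_deg k).2]
  have hfs : (Nat.factorial (k+1+1) : ℝ) = ((k:ℝ)+2) * (Nat.factorial (k+1) : ℝ) := by
    rw [Nat.factorial_succ]; push_cast; ring
  rw [hfs, pow_succ]
  ring

lemma roots_exist : ∀ k : ℕ, ∃ w : Fin (k+1) → ℝ, StrictMono w ∧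
    (∀ t : ℝ, (myQ k).eval t = 0 ↔ ∃ i, t = w i) := by
  intro k
  induction k with
  | zero =>
    refine ⟨fun _ => 0, ?_, ?_⟩
    · intro a b h
      exact absurd (Fin.fin_one_eq_zero a ▸ Fin.fin_one_eq_zero b ▸ rfl) h.ne
    · intro t
      simp only [myQ, eval_X]
      exact ⟨fun h => ⟨0, h⟩, fun ⟨_, h⟩ => h⟩
  | succ k ih =>
    obtain ⟨w, hw1, hw2⟩ := ih
    obtain ⟨z, hz1, hz2, -⟩ := step_lemma k (myQ k) (myQ (k+1)) (2*(k:ℝ)+3) ((k:ℝ)+2)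
      (by positivity) (myQ_deg k).1 (myQ_deg (k+1)).1 (myQ_lc_step k) rfl w hw1 hw2
    exact ⟨z, hz1, hz2⟩

lemma eval_eq_myQ (k : ℕ) (R : Polynomial ℝ)
    (h : ∀ x : ℝ, iteratedDeriv k (fun t : ℝ => t / (1 + t ^ 2) ^ ((3:ℝ)/2)) x
      = R.eval x / (1 + x ^ 2) ^ (((2 * k + 3 : ℕ) : ℝ)/2)) : R = myQ k := by
  apply Polynomial.funext
  intro x
  have hpos : (0:ℝ) < 1 + x ^ 2 := by positivity
  have hr : (0:ℝ) < (1 + x ^ 2) ^ (((2 * k + 3 : ℕ) : ℝ)/2) := Real.rpow_pos_of_pos hpos _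
  have h2 := (h x).symm.trans (myA_formula k x)
  rw [div_eq_iff hr.ne'] at h2
  rw [h2, mul_assoc, ← Real.rpow_add hpos]
  have he : -(2*(k:ℝ)+3)/2 + ((2 * k + 3 : ℕ) : ℝ)/2 = 0 := by push_cast; ring
  rw [he, Real.rpow_zero, mul_one]

theorem stmt_7 (L : ℕ) (hL : 1 ≤ L) (P P' : Polynomial ℝ)
    (hdeg : P.natDegree = L + 1) (hdeg' : P'.natDegree = L)
    (hP : ∀ x : ℝ, iteratedDeriv L (fun t : ℝ => t / (1 + t ^ 2) ^ ((3:ℝ)/2)) x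
        = P.eval x / (1 + x ^ 2) ^ (((2 * L + 3 : ℕ) : ℝ)/2))
    (hP' : ∀ x : ℝ, iteratedDeriv (L - 1) (fun t : ℝ => t / (1 + t ^ 2) ^ ((3:ℝ)/2)) x
        = P'.eval x / (1 + x ^ 2) ^ (((2 * (L - 1) + 3 : ℕ) : ℝ)/2)) :
    ∃ (z : Fin (L + 1) → ℝ) (w : Fin L → ℝ),
      StrictMono z ∧ StrictMono w ∧
      (∀ t : ℝ, P.eval t = 0 ↔ ∃ i, t = z i) ∧
      (∀ t : ℝ, P'.eval t = 0 ↔ ∃ i, t = w i) ∧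
      (∀ i : Fin L, z i.castSucc < w i ∧ w i < z i.succ) := by
  obtain ⟨m, rfl⟩ : ∃ m, L = m + 1 := ⟨L - 1, by omega⟩
  simp only [Nat.add_sub_cancel] at hP'
  have hPQ : P = myQ (m+1) := eval_eq_myQ (m+1) P hP
  have hPQ' : P' = myQ m := eval_eq_myQ m P' hP'
  obtain ⟨w, hw1, hw2⟩ := roots_exist m
  obtain ⟨z, hz1, hz2, hz3⟩ := step_lemma m (myQ m) (myQ (m+1)) (2*(m:ℝ)+3) ((m:ℝ)+2)
    (by positivity) (myQ_deg m).1 (myQ_deg (m+1)).1 (myQ_lc_step m) rfl w hw1 hw2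
  refine ⟨z, w, hz1, hw1, ?_, ?_, hz3⟩
  · intro t; rw [hPQ]; exact hz2 t
  · intro t; rw [hPQ']; exact hw2 t
end

section
/- For every integer L >= 1, the polynomial Q_L (of degree L) appearing in B_L(x) = Q_L(x)/(1+x^2)^{(2L+3)/2}, where B_L is the L-th derivative of 1/(1+x^2)^{3/2}, has L distinct real zeros, and the zeros of Q_L and Q_{L-1} strictly interlace. -/
open Polynomial Filter Set

noncomputable def Pk : ℕ → ℝ[X]
  | 0 => 1
  | (k+1) => (1 + X^2) * (Pk k).derivative - C (2*(k:ℝ)+3) * X * Pk k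

lemma derivform (P : ℝ[X]) (c x : ℝ) :
    HasDerivAt (fun y : ℝ => P.eval y / (1+y^2)^c)
      (((1 + X^2) * P.derivative - C (2*c) * X * P).eval x / (1+x^2)^(c+1)) x := by
  have hA : (0:ℝ) < 1 + x^2 := by positivity
  have h1 : HasDerivAt (fun y : ℝ => 1 + y^2) (2*x) x := by
    simpa using ((hasDerivAt_pow 2 x).const_add 1)
  have h2 : HasDerivAt (fun y : ℝ => (1+y^2)^c) (c * (1+x^2)^(c-1) * (2*x)) x :=
    by have h := Real.hasDerivAt_rpow_const (p := c) (Or.inl hA.ne'); exact h.comp x h1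
  have hP : HasDerivAt (fun y : ℝ => P.eval y) (P.derivative.eval x) x := P.hasDerivAt x
  have := hP.div h2 (by positivity)
  refine this.congr_deriv ?_
  have e1 : (1+x^2)^c = (1+x^2)^(c-1) * (1+x^2) := by
    have := (Real.rpow_add hA (c-1) 1).symm
    rw [Real.rpow_one] at this
    rw [this]; congr 1; ring
  have e2 : ((1+x^2)^c)^2 = (1+x^2)^(c-1) * (1+x^2)^(c+1) := by
    rw [sq, ← Real.rpow_add hA, ← Real.rpow_add hA]; congr 1; ring
  have hu : (1+x^2)^(c-1) ≠ 0 := by positivity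
  have hc1 : (1+x^2)^(c+1) ≠ 0 := by positivity
  rw [e2, e1]
  simp only [eval_sub, eval_mul, eval_add, eval_one, eval_pow, eval_X, eval_C]
  field_simp

lemma iterEq (k : ℕ) : iteratedDeriv k (fun t : ℝ => 1 / (1 + t ^ 2) ^ ((3:ℝ)/2))
    = fun x => (Pk k).eval x / (1+x^2)^((2*(k:ℝ)+3)/2) := by
  induction k with
  | zero =>
    funext x
    simp [Pk]
  | succ k ih =>
    rw [iteratedDeriv_succ, ih]
    funext x
    have h := derivform (Pk k) ((2*(k:ℝ)+3)/2) x
    rw [HasDerivAt.deriv h]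
    have hc : (2:ℝ) * ((2*(k:ℝ)+3)/2) = 2*(k:ℝ)+3 := by ring
    have he : (2*(k:ℝ)+3)/2 + 1 = (2*((k:ℕ)+1:ℝ)+3)/2 := by ring
    rw [hc, he]
    simp [Pk]

lemma Pk_deg : ∀ k, (Pk k).natDegree ≤ k ∧ (Pk k).coeff k ≠ 0 := by
  intro k
  induction k with
  | zero => simp [Pk]
  | succ k ih =>
    obtain ⟨hle, hne⟩ := ih
    have hd1 : ((1 + X^2 : ℝ[X]) * (Pk k).derivative).natDegree ≤ k + 1 := by
      rcases Nat.eq_zero_or_pos k with hk | hk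
      · subst hk
        have : (Pk 0).derivative = 0 := by simp [Pk]
        simp [this]
      · refine le_trans (natDegree_mul_le) ?_
        have h1 : (1 + X^2 : ℝ[X]).natDegree ≤ 2 := by compute_degree
        have h2 := (Pk k).natDegree_derivative_le
        omega
    have hd2 : ((C (2*(k:ℝ)+3) * X * Pk k)).natDegree ≤ k + 1 := by
      refine le_trans natDegree_mul_le ?_
      have : ((C (2*(k:ℝ)+3) * X : ℝ[X])).natDegree ≤ 1 := by compute_degree
      omega
    constructor
    · exact le_trans (natDegree_sub_le _ _) (by omega)
    · have e0 : (Pk k).coeff (k+2) = 0 := coeff_eq_zero_of_natDegree_lt (by omega)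
      have e1 : ((1 + X^2 : ℝ[X]) * (Pk k).derivative).coeff (k+1)
          = (k : ℝ) * (Pk k).coeff k := by
        rw [add_mul, one_mul, coeff_add]
        rcases Nat.eq_zero_or_pos k with hk | hk
        · subst hk
          have : (Pk 0).derivative = 0 := by simp [Pk]
          simp [this, Pk]
        · obtain ⟨j, rfl⟩ := Nat.exists_eq_succ_of_ne_zero (Nat.pos_iff_ne_zero.mp hk)
          simp only [Nat.succ_eq_add_one] at *
          have h3 : (X^2 * (Pk (j+1)).derivative).coeff (j + 1 + 1) = (Pk (j+1)).derivative.coeff j := by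
            have := coeff_X_pow_mul ((Pk (j+1)).derivative) 2 j
            rw [show j + 2 = j + 1 + 1 by ring] at this
            exact this
          have e0' : (Pk (j+1)).coeff (j + 1 + 1 + 1) = 0 :=
            coeff_eq_zero_of_natDegree_lt (by omega)
          rw [h3, coeff_derivative, coeff_derivative, e0']
          push_cast
          ring
      have e2 : ((C (2*(k:ℝ)+3) * X * Pk k)).coeff (k+1) = (2*(k:ℝ)+3) * (Pk k).coeff k := by
        rw [mul_assoc, coeff_C_mul, coeff_X_mul]
      have : (Pk (k+1)).coeff (k+1) = -((k:ℝ)+3) * (Pk k).coeff k := by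
        show ((1 + X^2) * (Pk k).derivative - C (2*(k:ℝ)+3) * X * Pk k).coeff (k+1) = _
        rw [coeff_sub, e1, e2]; ring
      rw [this]
      exact mul_ne_zero (by push_cast; norm_num; nlinarith [ (0:ℝ) ≤ (k:ℝ)]) hne

lemma tendsto_top (P : ℝ[X]) (c : ℝ) (hc : (P.natDegree : ℝ) + 1 ≤ c) :
    Tendsto (fun x : ℝ => P.eval x / (1+x^2)^c) atTop (nhds 0) := by
  set m := P.natDegree + 1 with hm
  set R : ℝ[X] := (1 + X^2)^m with hR
  have h12 : (1 + X^2 : ℝ[X]).natDegree = 2 := by compute_degree!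
  have hndR : R.natDegree = 2 * m := by
    rw [hR, natDegree_pow, h12]; ring
  have hdlt : P.degree < R.degree := degree_lt_degree (by omega)
  have h0 := Polynomial.div_tendsto_zero_of_degree_lt P R hdlt
  refine squeeze_zero_norm (fun x => ?_) (by simpa using h0.abs)
  have hb : (0:ℝ) < 1 + x^2 := by positivity
  have hRx : R.eval x = (1+x^2)^(m:ℝ) := by
    rw [hR, eval_pow, ← Real.rpow_natCast]
    simp
  have hle : (1+x^2)^(m:ℝ) ≤ (1+x^2)^c := by
    apply Real.rpow_le_rpow_of_exponent_le (by nlinarith)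
    rw [hm]; push_cast; linarith
  have hpos : (0:ℝ) < (1+x^2)^(m:ℝ) := Real.rpow_pos_of_pos hb _
  rw [Real.norm_eq_abs, abs_div, hRx, abs_div, abs_of_pos hpos,
    abs_of_pos (Real.rpow_pos_of_pos hb c)]
  exact div_le_div_of_nonneg_left (abs_nonneg _) hpos hle

lemma tendsto_bot (P : ℝ[X]) (c : ℝ) (hc : (P.natDegree : ℝ) + 1 ≤ c) :
    Tendsto (fun x : ℝ => P.eval x / (1+x^2)^c) atBot (nhds 0) := by
  have hdc : ((P.comp (-X)).natDegree : ℝ) + 1 ≤ c := by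
    have h1 : (P.comp (-X)).natDegree ≤ P.natDegree := by
      refine le_trans (natDegree_comp_le) ?_
      simp
    have := Nat.cast_le (α := ℝ) |>.mpr h1
    linarith
  have h := (tendsto_top (P.comp (-X)) c hdc).comp tendsto_neg_atBot_atTop
  refine h.congr fun x => ?_
  simp [eval_comp]

lemma crit_left_pos (B B' : ℝ → ℝ) (hd : ∀ x, HasDerivAt B (B' x) x)
    (b : ℝ) (hb : B b = 0) (htend : Tendsto B atBot (nhds 0))
    (a : ℝ) (hab : a < b) (ha : 0 < B a) : ∃ c, c < b ∧ B' c = 0 := by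
  have hev : ∀ᶠ x in atBot, B x < B a := htend.eventually_lt_const ha
  obtain ⟨M, hM⟩ := eventually_atBot.mp hev
  set M' := min M a with hM'
  have hM'b : M' < b := lt_of_le_of_lt (min_le_right M a) hab
  have hcont : ContinuousOn B (Icc M' b) := fun x _ => ((hd x).continuousAt).continuousWithinAt
  obtain ⟨c, hcmem, hcmax⟩ := (isCompact_Icc).exists_isMaxOn (nonempty_Icc.mpr hM'b.le) hcont
  have haI : a ∈ Icc M' b := ⟨min_le_right M a, hab.le⟩
  have hBc : B a ≤ B c := hcmax haI
  have hcM' : c ≠ M' := by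
    intro h
    have : B M' < B a := hM M' (min_le_left M a)
    rw [h] at hBc; linarith
  have hcb : c ≠ b := by
    intro h
    rw [h, hb] at hBc; linarith
  have hco : c ∈ Ioo M' b := ⟨lt_of_le_of_ne hcmem.1 (Ne.symm hcM'),
    lt_of_le_of_ne hcmem.2 hcb⟩
  have : IsLocalMax B c := hcmax.isLocalMax (Icc_mem_nhds hco.1 hco.2)
  have hder : deriv B c = 0 := this.deriv_eq_zero
  exact ⟨c, hco.2, by rw [← (hd c).deriv]; exact hder⟩

lemma crit_left (B B' : ℝ → ℝ) (hd : ∀ x, HasDerivAt B (B' x) x)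
    (b : ℝ) (hb : B b = 0) (htend : Tendsto B atBot (nhds 0))
    (a : ℝ) (hab : a < b) (ha : B a ≠ 0) : ∃ c, c < b ∧ B' c = 0 := by
  rcases ha.lt_or_gt with h | h
  · obtain ⟨c, h1, h2⟩ := crit_left_pos (fun x => -B x) (fun x => -B' x)
      (fun x => (hd x).neg) b (by simp [hb]) (by simpa using htend.neg)
      a hab (by simpa using h)
    exact ⟨c, h1, by simpa using h2⟩
  · exact crit_left_pos B B' hd b hb htend a hab h

lemma crit_right (B B' : ℝ → ℝ) (hd : ∀ x, HasDerivAt B (B' x) x)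
    (b : ℝ) (hb : B b = 0) (htend : Tendsto B atTop (nhds 0))
    (a : ℝ) (hab : b < a) (ha : B a ≠ 0) : ∃ c, b < c ∧ B' c = 0 := by
  have hd' : ∀ x : ℝ, HasDerivAt (fun y => B (-y)) (-B' (-x)) x := by
    intro x
    exact ((hd (-x)).comp x (hasDerivAt_neg x)).congr_deriv (by ring)
  have htend' : Tendsto (fun y => B (-y)) atBot (nhds 0) :=
    htend.comp tendsto_neg_atBot_atTop
  obtain ⟨c, h1, h2⟩ := crit_left (fun y => B (-y)) (fun y => -B' (-y)) hd'
    (-b) (by simpa using hb) htend' (-a) (by linarith) (by simpa using ha)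
  exact ⟨-c, by linarith, by simpa using h2⟩

lemma Pk_natDegree (k : ℕ) : (Pk k).natDegree = k :=
  le_antisymm (Pk_deg k).1 (le_natDegree_of_ne_zero (Pk_deg k).2)

lemma Pk_ne_zero (k : ℕ) : Pk k ≠ 0 := fun h => (Pk_deg k).2 (by simp [h])

lemma hasDeriv_iter (k : ℕ) (x : ℝ) :
    HasDerivAt (iteratedDeriv k (fun t : ℝ => 1 / (1 + t ^ 2) ^ ((3:ℝ)/2)))
      ((Pk (k+1)).eval x / (1+x^2)^((2*((k:ℝ)+1)+3)/2)) x := by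
  rw [iterEq k]
  have h := derivform (Pk k) ((2*(k:ℝ)+3)/2) x
  have hc : (2*((2*(k:ℝ)+3)/2)) = 2*(k:ℝ)+3 := by ring
  have he : (2*(k:ℝ)+3)/2 + 1 = (2*((k:ℝ)+1)+3)/2 := by ring
  rw [hc, he] at h
  exact h

lemma div_rpow_zero_iff (a x c : ℝ) : a / (1+x^2)^c = 0 ↔ a = 0 := by
  have h : (0:ℝ) < (1+x^2)^c := Real.rpow_pos_of_pos (by positivity) _
  rw [_root_.div_eq_zero_iff]
  simp [h.ne']

lemma iter_eq_zero_iff (k : ℕ) (x : ℝ) :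
    iteratedDeriv k (fun t : ℝ => 1 / (1 + t ^ 2) ^ ((3:ℝ)/2)) x = 0 ↔ (Pk k).eval x = 0 := by
  rw [iterEq k]
  exact div_rpow_zero_iff _ _ _

lemma key : ∀ k : ℕ, ∃ (w : Fin k → ℝ) (v : Fin (k+1) → ℝ),
    StrictMono w ∧ StrictMono v ∧
    (∀ t, (Pk k).eval t = 0 ↔ ∃ i, t = w i) ∧
    (∀ t, (Pk (k+1)).eval t = 0 ↔ ∃ i, t = v i) ∧
    (∀ i : Fin k, v i.castSucc < w i ∧ w i < v i.succ) := by
  intro k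
  induction k with
  | zero =>
    refine ⟨Fin.elim0, fun _ => 0, fun i => i.elim0, ?_, ?_, ?_, fun i => i.elim0⟩
    · intro a b hab
      have ha := a.isLt
      have hb := b.isLt
      exact absurd (Fin.ext (by omega)) hab.ne
    · intro t; simp [Pk]
    · intro t
      have hPk1 : (Pk 1).eval t = -3 * t := by
        show ((1 + X^2) * (Pk 0).derivative - C (2*((0:ℕ):ℝ)+3) * X * Pk 0).eval t = -3 * t
        simp [Pk]
      rw [hPk1]
      constructor
      · intro h
        refine ⟨0, ?_⟩
        show t = 0
        linarith
      · rintro ⟨i, rfl⟩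
        show -3 * (0:ℝ) = 0
        ring
  | succ k ih =>
    obtain ⟨w, v, hw, hv, hrw, hrv, hint⟩ := ih
    clear hrw hint hw w
    set f : ℝ → ℝ := fun t : ℝ => 1 / (1 + t ^ 2) ^ ((3:ℝ)/2) with hf
    set B : ℝ → ℝ := iteratedDeriv (k+1) f with hB
    set g : ℝ → ℝ := fun x => (Pk (k+2)).eval x / (1+x^2)^((2*((k:ℝ)+1+1)+3)/2) with hg
    have hBd : ∀ x, HasDerivAt B (g x) x := by
      intro x
      have := hasDeriv_iter (k+1) x
      push_cast at this ⊢
      exact this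
    have hBroot : ∀ x, B x = 0 ↔ ∃ i, x = v i := by
      intro x
      rw [hB, iter_eq_zero_iff (k+1) x]
      exact hrv x
    have hgroot : ∀ x, g x = 0 ↔ (Pk (k+2)).eval x = 0 := by
      intro x
      rw [hg]
      exact div_rpow_zero_iff _ _ _
    -- limits
    have hdegc : ((Pk (k+1)).natDegree : ℝ) + 1 ≤ (2*((k:ℝ)+1)+3)/2 := by
      rw [Pk_natDegree]; push_cast; linarith
    have htop : Tendsto B atTop (nhds 0) := by
      rw [hB, iterEq (k+1)]
      have := tendsto_top (Pk (k+1)) ((2*((k:ℝ)+1)+3)/2) hdegc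
      push_cast at this ⊢
      exact this
    have hbot : Tendsto B atBot (nhds 0) := by
      rw [hB, iterEq (k+1)]
      have := tendsto_bot (Pk (k+1)) ((2*((k:ℝ)+1)+3)/2) hdegc
      push_cast at this ⊢
      exact this
    -- roots of B at v
    have hBv : ∀ i, B (v i) = 0 := fun i => (hBroot (v i)).mpr ⟨i, rfl⟩
    -- Rolle roots
    have hmid : ∀ i : Fin k, ∃ c ∈ Ioo (v i.castSucc) (v i.succ), g c = 0 := by
      intro i
      have hlt : v i.castSucc < v i.succ := hv (Fin.castSucc_lt_succ (i := i))
      exact exists_hasDerivAt_eq_zero hlt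
        (fun x _ => (hBd x).continuousAt.continuousWithinAt)
        (by rw [hBv, hBv]) (fun x _ => hBd x)
    choose m hm1 hm2 using hmid
    -- left root
    have hnl : B (v 0 - 1) ≠ 0 := by
      rw [Ne, hBroot]
      rintro ⟨i, hi⟩
      have : v 0 ≤ v i := hv.monotone (Fin.zero_le i)
      linarith
    obtain ⟨l, hl1, hl2⟩ := crit_left B g hBd (v 0) (hBv 0) hbot (v 0 - 1) (by linarith) hnl
    -- right root
    have hnr : B (v (Fin.last k) + 1) ≠ 0 := by
      rw [Ne, hBroot]
      rintro ⟨i, hi⟩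
      have : v i ≤ v (Fin.last k) := hv.monotone (Fin.le_last i)
      linarith
    obtain ⟨r, hr1, hr2⟩ := crit_right B g hBd (v (Fin.last k)) (hBv _) htop
      (v (Fin.last k) + 1) (by linarith) hnr
    -- the new root family
    set u : Fin (k+2) → ℝ := Fin.cons l (Fin.snoc m r) with hu
    have fact1 : ∀ j : Fin (k+1), v j < u j.succ := by
      intro j
      rw [hu, Fin.cons_succ]
      induction j using Fin.lastCases with
      | last => rw [Fin.snoc_last]; exact hr1
      | cast i => rw [Fin.snoc_castSucc]; exact (hm1 i).1

    have fact2 : ∀ j : Fin (k+1), u j.castSucc < v j := by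
      intro j
      induction j using Fin.cases with
      | zero => simp only [Fin.castSucc_zero, hu, Fin.cons_zero]; exact hl1
      | succ i =>
        rw [← Fin.succ_castSucc, hu, Fin.cons_succ, Fin.snoc_castSucc]
        exact (hm1 i).2
    have hIU : ∀ j : Fin (k+1), u j.castSucc < v j ∧ v j < u j.succ :=
      fun j => ⟨fact2 j, fact1 j⟩
    have hmono : StrictMono u := by
      rw [Fin.strictMono_iff_lt_succ]
      intro i
      exact lt_trans (fact2 i) (fact1 i)
    have hroot_u : ∀ i, (Pk (k+2)).eval (u i) = 0 := by
      intro i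
      induction i using Fin.cases with
      | zero => rw [hu, Fin.cons_zero, ← hgroot]; exact hl2
      | succ j =>
        rw [hu, Fin.cons_succ, ← hgroot]
        induction j using Fin.lastCases with
        | last => rw [Fin.snoc_last]; exact hr2
        | cast i => rw [Fin.snoc_castSucc]; exact hm2 i
    refine ⟨v, u, hv, hmono, hrv, ?_, hIU⟩
    intro t
    constructor
    · intro ht
      by_contra hcon
      push_neg at hcon
      have hinj : Function.Injective u := hmono.injective
      set S : Finset ℝ := insert t (Finset.image u Finset.univ) with hS
      have htni : t ∉ Finset.image u Finset.univ := by
        simp only [Finset.mem_image, Finset.mem_univ, true_and]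
        rintro ⟨i, hi⟩
        exact hcon i hi.symm
      have hcard : S.card = k + 3 := by
        rw [hS, Finset.card_insert_of_notMem htni, Finset.card_image_of_injective _ hinj]
        simp
      have hsub : S ⊆ (Pk (k+2)).roots.toFinset := by
        intro s hs
        rw [Multiset.mem_toFinset, mem_roots (Pk_ne_zero (k+2))]
        rcases Finset.mem_insert.mp hs with h | h
        · subst h; exact ht
        · obtain ⟨i, _, rfl⟩ := Finset.mem_image.mp h
          exact hroot_u i
      have h1 : S.card ≤ (Pk (k+2)).roots.toFinset.card := Finset.card_le_card hsub
      have h2 : (Pk (k+2)).roots.toFinset.card ≤ (Pk (k+2)).roots.card :=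
        Multiset.toFinset_card_le _
      have h3 := (Pk (k+2)).card_roots'
      rw [Pk_natDegree] at h3
      omega
    · rintro ⟨i, rfl⟩
      exact hroot_u i

theorem stmt_8 (L : ℕ) (hL : 1 ≤ L) (Q Q' : Polynomial ℝ)
    (hdeg : Q.natDegree = L) (hdeg' : Q'.natDegree = L - 1)
    (hQ : ∀ x : ℝ, iteratedDeriv L (fun t : ℝ => 1 / (1 + t ^ 2) ^ ((3:ℝ)/2)) x
        = Q.eval x / (1 + x ^ 2) ^ (((2 * L + 3 : ℕ) : ℝ)/2))
    (hQ' : ∀ x : ℝ, iteratedDeriv (L - 1) (fun t : ℝ => 1 / (1 + t ^ 2) ^ ((3:ℝ)/2)) x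
        = Q'.eval x / (1 + x ^ 2) ^ (((2 * (L - 1) + 3 : ℕ) : ℝ)/2)) :
    ∃ (z : Fin L → ℝ) (w : Fin (L - 1) → ℝ),
      StrictMono z ∧ StrictMono w ∧
      (∀ t : ℝ, Q.eval t = 0 ↔ ∃ i, t = z i) ∧
      (∀ t : ℝ, Q'.eval t = 0 ↔ ∃ i, t = w i) ∧
      (∀ i : Fin (L - 1), z (Fin.castLE (by omega) i) < w i ∧
        w i < z (Fin.cast (by omega) i.succ)) := by
  obtain ⟨k, rfl⟩ : ∃ k, L = k + 1 := ⟨L - 1, by omega⟩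
  have hk1 : k + 1 - 1 = k := by omega
  obtain ⟨w, v, hw, hv, hrw, hrv, hint⟩ := key k
  have hQeq : Q = Pk (k+1) := by
    apply Polynomial.funext
    intro x
    have h1 := (hQ x).symm
    have h2 := congrFun (iterEq (k+1)) x
    rw [h2] at h1
    have hD : (0:ℝ) < (1+x^2)^((2*((k:ℕ)+1:ℝ)+3)/2) := Real.rpow_pos_of_pos (by positivity) _
    have hexp : (((2 * (k+1) + 3 : ℕ) : ℝ))/2 = (2*(((k:ℕ)+1):ℝ)+3)/2 := by push_cast; ring
    rw [hexp] at h1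
    push_cast at h1 ⊢
    rw [div_eq_div_iff hD.ne' hD.ne'] at h1
    exact mul_right_cancel₀ hD.ne' h1.symm |>.symm
  have hQ'eq : Q' = Pk k := by
    apply Polynomial.funext
    intro x
    have h1 := (hQ' x).symm
    have h2 := congrFun (iterEq (k+1-1)) x
    rw [h2] at h1
    have hD : (0:ℝ) < (1+x^2)^((2*((k:ℕ):ℝ)+3)/2) := Real.rpow_pos_of_pos (by positivity) _
    have hexp : (((2 * (k+1-1) + 3 : ℕ) : ℝ))/2 = (2*((k:ℕ):ℝ)+3)/2 := by
      rw [hk1]; push_cast; ring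
    rw [hexp] at h1
    simp only [hk1] at h1
    push_cast at h1
    rw [div_eq_div_iff hD.ne' hD.ne'] at h1
    exact mul_right_cancel₀ hD.ne' h1
  refine ⟨v, w, hv, hw, ?_, ?_, ?_⟩
  · intro t; rw [hQeq]; exact hrv t
  · intro t; rw [hQ'eq]; exact hrw t
  · intro i
    exact hint i
end

section
/- For every integer L >= 1, the polynomials P_L and Q_L (defined via the L-th derivatives of x/(1+x^2)^{3/2} and 1/(1+x^2)^{3/2} respectively) have no common real zero, and their real zeros strictly interlace: there is exactly one zero of Q_L strictly between any two consecutive real zeros of P_L. -/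
open Polynomial Finset Filter

noncomputable def qq : ℕ → Polynomial ℝ
  | 0 => 1
  | (k+1) => (1 + X^2) * derivative (qq k) - C (2*(k:ℝ)+3) * X * qq k

noncomputable def pp : ℕ → Polynomial ℝ
  | 0 => X
  | (k+1) => (1 + X^2) * derivative (pp k) - C (2*(k:ℝ)+3) * X * pp k

lemma qq_succ (k : ℕ) : qq (k+1) = (1 + X^2) * derivative (qq k) - C (2*(k:ℝ)+3) * X * qq k := rfl
lemma pp_succ (k : ℕ) : pp (k+1) = (1 + X^2) * derivative (pp k) - C (2*(k:ℝ)+3) * X * pp k := rfl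

lemma pp_eq (k : ℕ) : pp (k+1) = X * qq (k+1) + C ((k:ℝ)+1) * ((1 + X^2) * qq k) := by
  induction k with
  | zero => simp [pp, qq, pp_succ, qq_succ]; ring
  | succ k ih =>
      rw [pp_succ (k+1), ih, qq_succ (k+1), qq_succ k]
      simp only [derivative_add, derivative_sub, derivative_mul, derivative_C, derivative_X,
        derivative_one, derivative_X_pow, qq_succ k, C_add, C_mul, map_ofNat, C_1,
        Nat.cast_add, Nat.cast_one, Nat.cast_ofNat, derivative_ofNat]
      ring

lemma hasDerivAt_aux (N : Polynomial ℝ) (m : ℕ) (x : ℝ) :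
    HasDerivAt (fun t : ℝ => N.eval t / (1+t^2)^(((m:ℕ):ℝ)/2))
      ((((1+X^2) * derivative N - C ((m:ℝ)) * X * N).eval x) / (1+x^2)^(((m+2:ℕ):ℝ)/2)) x := by
  have h1 : (0:ℝ) < 1 + x^2 := by positivity
  have hu : HasDerivAt (fun t : ℝ => 1 + t^2) (2*x) x := by
    simpa using ((hasDerivAt_pow 2 x).const_add 1)
  have hr : HasDerivAt (fun t : ℝ => (1+t^2)^((m:ℝ)/2))
      ((2*x) * ((m:ℝ)/2) * (1+x^2)^((m:ℝ)/2 - 1)) x :=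
    hu.rpow_const (Or.inl h1.ne')
  have hN : HasDerivAt (fun t : ℝ => N.eval t) (N.derivative.eval x) x := N.hasDerivAt x
  have hD : (1+x^2:ℝ)^((m:ℝ)/2) ≠ 0 := (Real.rpow_pos_of_pos h1 _).ne'
  have := hN.div hr hD
  refine this.congr_deriv ?_
  have e1 : (1+x^2:ℝ)^((m:ℝ)/2 - 1) = (1+x^2)^((m:ℝ)/2) / (1+x^2) := by
    rw [Real.rpow_sub h1, Real.rpow_one]
  have e3 : (1+x^2:ℝ)^((((m+2:ℕ)):ℝ)/2) = (1+x^2)^((m:ℝ)/2) * (1+x^2) := by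
    rw [show (((m+2:ℕ)):ℝ)/2 = (m:ℝ)/2 + 1 by push_cast; ring, Real.rpow_add h1, Real.rpow_one]
  rw [e1, e3]
  simp only [eval_sub, eval_mul, eval_add, eval_one, eval_pow, eval_X, eval_C]
  field_simp

lemma iter_formula (N0 : Polynomial ℝ) (F : ℕ → Polynomial ℝ) (hF0 : F 0 = N0)
    (hFs : ∀ k, F (k+1) = (1+X^2) * derivative (F k) - C (2*(k:ℝ)+3) * X * F k) :
    ∀ k x, iteratedDeriv k (fun t : ℝ => N0.eval t / (1+t^2)^((3:ℝ)/2)) x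
      = (F k).eval x / (1+x^2)^(((2*k+3:ℕ):ℝ)/2) := by
  intro k
  induction k with
  | zero =>
      intro x
      simp [hF0]
  | succ k ih =>
      intro x
      rw [iteratedDeriv_succ, funext ih]
      have h := hasDerivAt_aux (F k) (2*k+3) x
      rw [show C (((2*k+3:ℕ)):ℝ) = C (2*(k:ℝ)+3) by push_cast; ring_nf] at h
      rw [← hFs k] at h
      rw [show 2*(k+1)+3 = 2*k+3+2 from by ring]
      exact h.deriv

lemma prod_sign {ι : Type*} [DecidableEq ι] (s : Finset ι) (f : ι → ℝ)
    (h0 : ∀ i ∈ s, f i ≠ 0) :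
    0 < (-1:ℝ)^((s.filter (fun i => f i < 0)).card) * ∏ i ∈ s, f i := by
  induction s using Finset.induction with
  | empty => simp
  | @insert a s ha ih =>
      rw [Finset.filter_insert, Finset.prod_insert ha]
      rcases (h0 a (mem_insert_self a s)).lt_or_gt with h | h
      · rw [if_pos h, Finset.card_insert_of_notMem (by simp [ha]), pow_succ]
        have := ih (fun i hi => h0 i (mem_insert_of_mem hi))
        nlinarith
      · rw [if_neg (not_lt.2 h.le)]
        have := ih (fun i hi => h0 i (mem_insert_of_mem hi))
        nlinarith

lemma card_filter_le_nat (m c : ℕ) :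
    ((Finset.range m).filter (fun i => c ≤ i)).card = m - c := by
  induction m with
  | zero => simp
  | succ m ih =>
      rw [Finset.range_add_one, Finset.filter_insert]
      by_cases h : c ≤ m
      · rw [if_pos h, Finset.card_insert_of_notMem (by simp), ih]; omega
      · rw [if_neg h, ih]; omega

lemma card_filter_le_fin (m c : ℕ) :
    ((Finset.univ : Finset (Fin m)).filter (fun i : Fin m => c ≤ (i:ℕ))).card = m - c := by
  rw [Finset.card_filter, Fin.sum_univ_eq_sum_range (fun i => if c ≤ i then 1 else 0),
    ← Finset.card_filter, card_filter_le_nat]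

lemma eval_deriv_prod (k : ℕ) (w : Fin k → ℝ) (j : Fin k) :
    (derivative (∏ i, (X - C (w i)))).eval (w j) = ∏ i ∈ Finset.univ.erase j, (w j - w i) := by
  rw [← Finset.mul_prod_erase Finset.univ _ (Finset.mem_univ j), derivative_mul]
  simp [eval_prod]

lemma core (m : ℕ) (R : Polynomial ℝ) (a : ℝ) (ha0 : a ≠ 0)
    (hdeg : R.natDegree ≤ m+1) (hcoeff : R.coeff (m+1) = a)
    (w : Fin m → ℝ) (hw : StrictMono w)
    (hsign : ∀ j : Fin m, 0 < a * R.eval (w j) * (-1)^(m - (j:ℕ))) :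
    ∃ r : Fin (m+1) → ℝ, StrictMono r ∧ (R = C a * ∏ i, (X - C (r i))) ∧
      ∀ j : Fin m, r j.castSucc < w j ∧ w j < r j.succ := by
  classical
  set S := C a * R with hS
  have hSeval : ∀ x, S.eval x = a * R.eval x := by intro x; simp [hS]
  have hScoeff : S.coeff (m+1) = a * a := by rw [hS, coeff_C_mul, hcoeff]
  have hSdeg_le : S.natDegree ≤ m+1 := (natDegree_C_mul_le _ _).trans hdeg
  have hSdeg : S.natDegree = m+1 := le_antisymm hSdeg_le
    (le_natDegree_of_ne_zero (by rw [hScoeff]; exact mul_ne_zero ha0 ha0))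
  have hSlead : S.leadingCoeff = a * a := by rw [leadingCoeff, hSdeg, hScoeff]
  have hSne : S ≠ 0 := fun h => by rw [h, leadingCoeff_zero] at hSlead; exact ha0 (by nlinarith [hSlead.symm])
  have hSdegpos : 0 < S.degree := by
    rw [degree_eq_natDegree hSne, hSdeg]; exact_mod_cast Nat.succ_pos m
  -- right side
  have htop : Tendsto (fun x => S.eval x) atTop atTop :=
    S.tendsto_atTop_of_leadingCoeff_nonneg hSdegpos (by rw [hSlead]; exact mul_self_nonneg a)
  obtain ⟨xp, hxppos, hxpw⟩ :=
    ((htop.eventually_gt_atTop 0).and (eventually_all.2 fun i => eventually_gt_atTop (w i))).exists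
  -- left side
  set T := S.comp (-X) with hT
  have hTeval : ∀ x : ℝ, T.eval x = S.eval (-x) := by intro x; simp [hT, eval_comp]
  have hTlead : T.leadingCoeff = a * a * (-1)^(m+1) := by
    rw [hT, leadingCoeff_comp (by simp), hSlead, hSdeg]; simp
  have hTne : T ≠ 0 := fun h => by
    rw [h, leadingCoeff_zero] at hTlead
    have h2 : (a*a) * (-1:ℝ)^(m+1) ≠ 0 := by
      apply mul_ne_zero (mul_ne_zero ha0 ha0)
      positivity
    exact h2 hTlead.symm
  have hTdegpos : 0 < T.degree := by
    rw [degree_eq_natDegree hTne, hT, natDegree_comp]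
    simp only [natDegree_neg, natDegree_X, mul_one, hSdeg]
    exact_mod_cast Nat.succ_pos m
  have hevT : ∀ᶠ y in atTop, 0 < (-1:ℝ)^(m+1) * T.eval y := by
    rcases Nat.even_or_odd (m+1) with h | h
    · have h1 : ((-1:ℝ))^(m+1) = 1 := h.neg_one_pow
      have ht := T.tendsto_atTop_of_leadingCoeff_nonneg hTdegpos (by rw [hTlead, h1, mul_one]; exact mul_self_nonneg a)
      filter_upwards [ht.eventually_gt_atTop 0] with y hy
      rw [h1]; linarith
    · have h1 : ((-1:ℝ))^(m+1) = -1 := h.neg_one_pow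
      have ht := T.tendsto_atBot_of_leadingCoeff_nonpos hTdegpos
        (by rw [hTlead, h1]; nlinarith [mul_self_nonneg a])
      filter_upwards [ht.eventually_lt_atBot 0] with y hy
      rw [h1]; linarith
  obtain ⟨y₀, hy₀sign, hy₀w, hy₀x⟩ :=
    (hevT.and ((eventually_all.2 fun i => eventually_gt_atTop (-(w i))).and
      (eventually_gt_atTop (-xp)))).exists
  set xm := -y₀ with hxmdef
  have hxmsign : 0 < (-1:ℝ)^(m+1) * S.eval xm := by rw [hxmdef, ← hTeval]; exact hy₀sign
  have hxmw : ∀ i, xm < w i := fun i => by have := hy₀w i; rw [hxmdef]; linarith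
  have hxmx : xm < xp := by rw [hxmdef]; linarith
  -- the node sequence
  set t : ℕ → ℝ := fun j => if j = 0 then xm else if h : j - 1 < m then w ⟨j-1, h⟩ else xp with ht'
  have ht0 : t 0 = xm := by simp [ht']
  have htw : ∀ (j : ℕ) (h : j < m), t (j+1) = w ⟨j, h⟩ := by
    intro j h; simp [ht', h]
  have htlast : t (m+1) = xp := by simp [ht']
  have htmono : ∀ j, j ≤ m → t j < t (j+1) := by
    intro j hj
    rcases Nat.eq_zero_or_pos j with rfl | hj0
    · rcases Nat.eq_zero_or_pos m with rfl | hm0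
      · rw [ht0, htlast]; exact hxmx
      · rw [ht0, htw 0 hm0]; exact hxmw _
    · obtain ⟨i, rfl⟩ := Nat.exists_eq_succ_of_ne_zero hj0.ne'
      rcases lt_or_eq_of_le hj with h | h
      · have hi : i < m := by omega
        have hi1 : i + 1 < m := by omega
        rw [htw i hi, htw (i+1) hi1]
        exact hw (by simp [Fin.lt_def])
      · have hi : i < m := by omega
        rw [htw i hi, show i + 1 + 1 = m + 1 by omega, htlast]
        exact hxpw _
  have htsign : ∀ j, j ≤ m + 1 → 0 < (-1:ℝ)^(m+1-j) * S.eval (t j) := by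
    intro j hj
    rcases Nat.eq_zero_or_pos j with rfl | hj0
    · simpa [ht0] using hxmsign
    · obtain ⟨i, rfl⟩ := Nat.exists_eq_succ_of_ne_zero hj0.ne'
      rcases lt_or_eq_of_le hj with h | h
      · have hi : i < m := by omega
        rw [htw i hi, hSeval]
        have := hsign ⟨i, hi⟩
        have hmi : m + 1 - (i+1) = m - i := by omega
        rw [hmi]
        simpa [mul_comm] using this
      · have : i = m := by omega
        subst this
        simp only [Nat.sub_self, pow_zero, one_mul, htlast]
        exact hxppos
  -- roots by IVT
  have hroot : ∀ j : Fin (m+1), ∃ x, x ∈ Set.Ioo (t j) (t (j+1)) ∧ S.eval x = 0 := by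
    intro j
    have hj : (j:ℕ) ≤ m := by omega
    have hu := htsign j (by omega)
    have hv := htsign ((j:ℕ)+1) (by omega)
    have hsplit : m + 1 - (j:ℕ) = (m - j) + 1 := by omega
    have hstep : m + 1 - ((j:ℕ)+1) = m - j := by omega
    rw [hsplit, pow_succ] at hu
    rw [hstep] at hv
    have hcont : ContinuousOn (fun x => S.eval x) (Set.Icc (t j) (t ((j:ℕ)+1))) :=
      (Polynomial.continuous S).continuousOn
    rcases Nat.even_or_odd (m - (j:ℕ)) with h | h
    · have h1 : ((-1:ℝ))^(m-(j:ℕ)) = 1 := h.neg_one_pow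
      rw [h1] at hu hv
      have h0 : (0:ℝ) ∈ Set.Ioo (S.eval (t j)) (S.eval (t ((j:ℕ)+1))) :=
        ⟨by nlinarith, by linarith⟩
      obtain ⟨x, hx, hx0⟩ := intermediate_value_Ioo (htmono j hj).le hcont h0
      exact ⟨x, hx, hx0⟩
    · have h1 : ((-1:ℝ))^(m-(j:ℕ)) = -1 := h.neg_one_pow
      rw [h1] at hu hv
      have h0 : (0:ℝ) ∈ Set.Ioo (S.eval (t ((j:ℕ)+1))) (S.eval (t j)) :=
        ⟨by linarith, by nlinarith⟩
      obtain ⟨x, hx, hx0⟩ := intermediate_value_Ioo' (htmono j hj).le hcont h0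
      exact ⟨x, hx, hx0⟩
  choose r hrIoo hrS using hroot
  have hr0 : ∀ j, R.eval (r j) = 0 := by
    intro j
    have := hrS j
    rw [hSeval] at this
    exact (mul_eq_zero.1 this).resolve_left ha0
  have hrmono : StrictMono r := by
    rw [Fin.strictMono_iff_lt_succ]
    intro i
    have h1 := (hrIoo i.castSucc).2
    have h2 := (hrIoo i.succ).1
    simp only [Fin.coe_castSucc, Fin.val_succ] at h1 h2
    linarith
  have hinter : ∀ j : Fin m, r j.castSucc < w j ∧ w j < r j.succ := by
    intro j
    have h1 := (hrIoo j.castSucc).2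
    have h2 := (hrIoo j.succ).1
    simp only [Fin.coe_castSucc, Fin.val_succ] at h1 h2
    rw [htw j j.isLt] at h1 h2
    exact ⟨by simpa using h1, by simpa using h2⟩
  refine ⟨r, hrmono, ?_, hinter⟩
  -- the factorization
  have hmonic : (∏ i : Fin (m+1), (X - C (r i))).Monic :=
    monic_prod_of_monic _ _ fun i _ => monic_X_sub_C _
  have hproddeg : (∏ i : Fin (m+1), (X - C (r i))).natDegree = m+1 := by
    rw [natDegree_prod_of_monic _ _ fun i _ => monic_X_sub_C _]
    simp [natDegree_X_sub_C]
  set F := C a * ∏ i : Fin (m+1), (X - C (r i)) with hF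
  have hFcoeff : F.coeff (m+1) = a := by
    have h2 := hmonic.coeff_natDegree
    rw [hproddeg] at h2
    rw [hF, coeff_C_mul, h2, mul_one]
  have hFdeg : F.natDegree ≤ m+1 := (natDegree_C_mul_le _ _).trans hproddeg.le
  have hd : R - F = 0 := by
    apply Polynomial.eq_zero_of_natDegree_lt_card_of_eval_eq_zero _ hrmono.injective
    · intro i
      rw [eval_sub, hr0 i, hF, eval_mul, eval_prod]
      rw [Finset.prod_eq_zero (Finset.mem_univ i) (by simp)]
      ring
    · have hdd : (R - F).natDegree ≤ m := by
        rw [natDegree_le_iff_coeff_eq_zero]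
        intro n hn
        rw [coeff_sub]
        rcases Nat.lt_or_ge n (m+2) with h | h
        · have : n = m+1 := by omega
          subst this
          rw [hcoeff, hFcoeff, sub_self]
        · rw [coeff_eq_zero_of_natDegree_lt (by omega), coeff_eq_zero_of_natDegree_lt (by omega),
            sub_self]
      have : Fintype.card (Fin (m+1)) = m+1 := Fintype.card_fin _
      omega
  have := sub_eq_zero.1 hd
  exact this

lemma qq_zero : qq 0 = 1 := rfl
lemma pp_zero : pp 0 = X := rfl

-- basic facts about product form
lemma pf_natDegree (k : ℕ) (c : ℝ) (w : Fin k → ℝ) :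
    (C c * ∏ i, (X - C (w i))).natDegree ≤ k := by
  refine (natDegree_C_mul_le _ _).trans ?_
  refine le_of_eq ?_
  rw [natDegree_prod_of_monic _ _ fun i _ => monic_X_sub_C _]
  simp [natDegree_X_sub_C]

lemma pf_coeff (k : ℕ) (c : ℝ) (w : Fin k → ℝ) :
    (C c * ∏ i, (X - C (w i))).coeff k = c := by
  have hmonic : (∏ i : Fin k, (X - C (w i))).Monic :=
    monic_prod_of_monic _ _ fun i _ => monic_X_sub_C _
  have hdeg : (∏ i : Fin k, (X - C (w i))).natDegree = k := by
    rw [natDegree_prod_of_monic _ _ fun i _ => monic_X_sub_C _]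
    simp [natDegree_X_sub_C]
  have h2 := hmonic.coeff_natDegree
  rw [hdeg] at h2
  rw [coeff_C_mul, h2, mul_one]

-- sign of eval of derivative at a root
lemma sign_deriv_at_root (k : ℕ) (c : ℝ) (hc : c ≠ 0) (w : Fin k → ℝ) (hw : StrictMono w)
    (j : Fin k) :
    0 < c * ((derivative (C c * ∏ i, (X - C (w i)))).eval (w j)) * (-1:ℝ)^(k - 1 - (j:ℕ)) := by
  rw [derivative_C_mul, eval_C_mul, eval_deriv_prod k w j]
  have hne : ∀ i ∈ Finset.univ.erase j, w j - w i ≠ 0 := by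
    intro i hi
    have : i ≠ j := (Finset.mem_erase.1 hi).1
    exact sub_ne_zero.2 fun h => this (hw.injective h.symm)
  have hcount : (Finset.univ.erase j).filter (fun i => w j - w i < 0)
      = Finset.univ.filter (fun i : Fin k => (j:ℕ)+1 ≤ (i:ℕ)) := by
    ext i
    simp only [Finset.mem_filter, Finset.mem_erase, Finset.mem_univ, true_and, and_true,
      sub_neg, hw.lt_iff_lt]
    constructor
    · rintro ⟨hne', hlt⟩; exact Nat.succ_le_of_lt hlt
    · intro h
      have : j < i := by rwa [Fin.lt_def, ← Nat.succ_le_iff]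
      exact ⟨fun he => absurd he (ne_of_gt this), this⟩
  have hps := prod_sign (Finset.univ.erase j) (fun i => w j - w i) hne
  rw [hcount, card_filter_le_fin] at hps
  have hkj : k - ((j:ℕ)+1) = k - 1 - (j:ℕ) := by omega
  rw [hkj] at hps
  nlinarith [sq_nonneg c, mul_self_pos.2 hc]

lemma qq_coeff_succ (k : ℕ) (c : ℝ) (w : Fin k → ℝ)
    (hq : qq k = C c * ∏ i, (X - C (w i))) :
    (qq (k+1)).coeff (k+1) = -((k:ℝ)+3) * c := by
  have hqdeg : (qq k).natDegree ≤ k := hq ▸ pf_natDegree k c w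
  have hqc : (qq k).coeff k = c := hq ▸ pf_coeff k c w
  have hD : (derivative (qq k)).natDegree ≤ k - 1 :=
    (natDegree_derivative_le _).trans (by omega)
  rw [qq_succ k]
  rw [coeff_sub]
  have h1 : ((1 + X^2) * derivative (qq k)).coeff (k+1) = (k:ℝ) * c := by
    rw [add_mul, one_mul, coeff_add]
    rw [coeff_eq_zero_of_natDegree_lt (lt_of_le_of_lt hD (by omega))]
    rw [mul_comm (X^2), Polynomial.coeff_mul_X_pow']
    rcases Nat.eq_zero_or_pos k with rfl | hk
    · norm_num
    · rw [if_pos (by omega)]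
      rw [Polynomial.coeff_derivative]
      rw [show k + 1 - 2 + 1 = k by omega, hqc]
      push_cast [show k + 1 - 2 = k - 1 by omega]
      rw [zero_add]
      rw [Nat.cast_sub hk]
      push_cast
      ring
  have h2 : (C (2*(k:ℝ)+3) * X * qq k).coeff (k+1) = (2*(k:ℝ)+3) * c := by
    rw [mul_assoc, coeff_C_mul, coeff_X_mul, hqc]
  rw [h1, h2]
  ring

lemma qstep (k : ℕ) (c : ℝ) (w : Fin k → ℝ) (hw : StrictMono w) (hc : 0 < (-1:ℝ)^k * c)
    (hq : qq k = C c * ∏ i, (X - C (w i))) :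
    ∃ (c' : ℝ) (r : Fin (k+1) → ℝ), StrictMono r ∧ 0 < (-1:ℝ)^(k+1) * c' ∧
      (qq (k+1) = C c' * ∏ i, (X - C (r i))) ∧
      ∀ j : Fin k, r j.castSucc < w j ∧ w j < r j.succ := by
  have hc0 : c ≠ 0 := by
    intro h; rw [h, mul_zero] at hc; exact lt_irrefl 0 hc
  set c' : ℝ := -((k:ℝ)+3) * c with hc'
  have hc'0 : c' ≠ 0 := by
    apply mul_ne_zero _ hc0
    intro h
    have : (0:ℝ) ≤ (k:ℝ) := Nat.cast_nonneg k
    nlinarith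
  have hdeg1 : (qq (k+1)).natDegree ≤ k + 1 := by
    rw [qq_succ k]
    refine (natDegree_sub_le _ _).trans ?_
    have hqdeg : (qq k).natDegree ≤ k := hq ▸ pf_natDegree k c w
    have b1 : ((1+X^2) * derivative (qq k)).natDegree ≤ k + 1 := by
      rcases Nat.eq_zero_or_pos k with rfl | hk
      · have hd0 : derivative (qq 0) = 0 := by
          rw [Polynomial.eq_C_of_natDegree_le_zero (Nat.le_zero.1 hqdeg).le]
          simp
        simp [hd0]
      · refine (natDegree_mul_le).trans ?_
        have hdd : (derivative (qq k)).natDegree ≤ k - 1 :=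
          (natDegree_derivative_le _).trans (by omega)
        have h2 : (1 + X^2 : Polynomial ℝ).natDegree ≤ 2 := by
          refine (natDegree_add_le _ _).trans ?_
          simp
        omega
    have b2 : (C (2*(k:ℝ)+3) * X * qq k).natDegree ≤ k + 1 := by
      refine (natDegree_mul_le).trans ?_
      have h3 : (C (2*(k:ℝ)+3) * X).natDegree ≤ 1 := by
        refine (natDegree_mul_le).trans ?_
        rw [natDegree_C, natDegree_X]
      omega
    omega
  have hcf : (qq (k+1)).coeff (k+1) = c' := qq_coeff_succ k c w hq
  have hsign : ∀ j : Fin k, 0 < c' * (qq (k+1)).eval (w j) * (-1:ℝ)^(k - (j:ℕ)) := by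
    intro j
    have hd := sign_deriv_at_root k c hc0 w hw j
    rw [← hq] at hd
    have heval : (qq (k+1)).eval (w j) = (1 + (w j)^2) * (derivative (qq k)).eval (w j) := by
      rw [qq_succ k]
      have : (qq k).eval (w j) = 0 := by
        rw [hq]
        simp only [eval_mul, eval_C, eval_prod, eval_sub, eval_X]
        rw [Finset.prod_eq_zero (Finset.mem_univ j) (by simp)]
        ring
      simp [this]
    rw [heval]
    have hj : (j:ℕ) < k := j.isLt
    have hx : (-1:ℝ)^(k - (j:ℕ)) = -(-1:ℝ)^(k - 1 - (j:ℕ)) := by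
      rw [show k - (j:ℕ) = (k - 1 - (j:ℕ)) + 1 by omega, pow_succ]
      ring
    rw [hx, hc']
    have hw2 : (0:ℝ) < 1 + (w j)^2 := by positivity
    have hk3 : (0:ℝ) < (k:ℝ) + 3 := by positivity
    nlinarith [mul_pos (mul_pos hk3 hw2) hd]
  obtain ⟨r, hr1, hr2, hr3⟩ := core k (qq (k+1)) c' hc'0 hdeg1 hcf w hw
    hsign
  refine ⟨c', r, hr1, ?_, hr2, hr3⟩
  rw [hc']
  have : (-1:ℝ)^(k+1) * (-((k:ℝ)+3) * c) = ((k:ℝ)+3) * ((-1:ℝ)^k * c) := by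
    rw [pow_succ]; ring
  rw [this]
  positivity

lemma qmain : ∀ k : ℕ, ∃ (c : ℝ) (w : Fin k → ℝ), StrictMono w ∧ 0 < (-1:ℝ)^k * c ∧
    qq k = C c * ∏ i, (X - C (w i)) := by
  intro k
  induction k with
  | zero =>
      refine ⟨1, Fin.elim0, fun i => i.elim0, by norm_num, ?_⟩
      rw [qq_zero]
      simp
  | succ k ih =>
      obtain ⟨c, w, hw, hc, hq⟩ := ih
      obtain ⟨c', r, hr1, hc', hq', _⟩ := qstep k c w hw hc hq
      exact ⟨c', r, hr1, hc', hq'⟩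

theorem stmt_10 (L : ℕ) (hL : 1 ≤ L) (P Q : Polynomial ℝ)
    (hdegP : P.natDegree = L + 1) (hdegQ : Q.natDegree = L)
    (hP : ∀ x : ℝ, iteratedDeriv L (fun t : ℝ => t / (1 + t ^ 2) ^ ((3:ℝ)/2)) x
        = P.eval x / (1 + x ^ 2) ^ (((2 * L + 3 : ℕ) : ℝ)/2))
    (hQ : ∀ x : ℝ, iteratedDeriv L (fun t : ℝ => 1 / (1 + t ^ 2) ^ ((3:ℝ)/2)) x
        = Q.eval x / (1 + x ^ 2) ^ (((2 * L + 3 : ℕ) : ℝ)/2)) :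
    (∀ x : ℝ, ¬(P.eval x = 0 ∧ Q.eval x = 0)) ∧
    ∃ (z : Fin (L + 1) → ℝ) (w : Fin L → ℝ),
      StrictMono z ∧ StrictMono w ∧
      (∀ t : ℝ, P.eval t = 0 ↔ ∃ i, t = z i) ∧
      (∀ t : ℝ, Q.eval t = 0 ↔ ∃ i, t = w i) ∧
      (∀ i : Fin L, z i.castSucc < w i ∧ w i < z i.succ) := by
  -- Identify Q with qq L and P with pp L
  have hQeq : Q = qq L := by
    apply Polynomial.funext
    intro x
    have h2 := iter_formula 1 qq qq_zero qq_succ L x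
    rw [show (fun t : ℝ => Polynomial.eval t (1:Polynomial ℝ) / (1+t^2)^((3:ℝ)/2))
        = (fun t : ℝ => 1 / (1+t^2)^((3:ℝ)/2)) by funext t; simp] at h2
    have h1 := hQ x
    rw [h1] at h2
    have hD : ((1:ℝ)+x^2)^(((2*L+3:ℕ):ℝ)/2) ≠ 0 := by positivity
    have h3 := (div_eq_div_iff hD hD).1 h2
    exact mul_right_cancel₀ hD h3
  have hPeq : P = pp L := by
    apply Polynomial.funext
    intro x
    have h2 := iter_formula X pp pp_zero pp_succ L x
    rw [show (fun t : ℝ => Polynomial.eval t (X:Polynomial ℝ) / (1+t^2)^((3:ℝ)/2))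
        = (fun t : ℝ => t / (1+t^2)^((3:ℝ)/2)) by funext t; simp] at h2
    have h1 := hP x
    rw [h1] at h2
    have hD : ((1:ℝ)+x^2)^(((2*L+3:ℕ):ℝ)/2) ≠ 0 := by positivity
    have h3 := (div_eq_div_iff hD hD).1 h2
    exact mul_right_cancel₀ hD h3
  obtain ⟨M, rfl⟩ : ∃ M, L = M + 1 := ⟨L-1, by omega⟩
  obtain ⟨c, v, hv, hc, hqM⟩ := qmain M
  obtain ⟨c', wv, hwv, hc'pos, hqL, hint⟩ := qstep M c v hv hc hqM
  have hc0 : c ≠ 0 := by intro h; rw [h, mul_zero] at hc; exact lt_irrefl 0 hc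
  have hc'0 : c' ≠ 0 := by intro h; rw [h, mul_zero] at hc'pos; exact lt_irrefl 0 hc'pos
  have hc'val : c' = -((M:ℝ)+3)*c := by
    rw [← pf_coeff (M+1) c' wv, ← hqL, qq_coeff_succ M c v hqM]
  have hPP := pp_eq M
  -- degree and top coefficient of pp (M+1)
  have hdeg : (pp (M+1)).natDegree ≤ M + 2 := by
    rw [hPP]
    refine (natDegree_add_le _ _).trans ?_
    have b1 : (X * qq (M+1)).natDegree ≤ M + 2 := by
      refine (natDegree_mul_le).trans ?_
      have := hqL ▸ pf_natDegree (M+1) c' wv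
      rw [natDegree_X]
      omega
    have b2 : (C ((M:ℝ)+1) * ((1+X^2) * qq M)).natDegree ≤ M + 2 := by
      refine (natDegree_mul_le).trans ?_
      rw [natDegree_C, zero_add]
      refine (natDegree_mul_le).trans ?_
      have h2 : (1 + X^2 : Polynomial ℝ).natDegree ≤ 2 := by
        refine (natDegree_add_le _ _).trans ?_
        simp
      have := hqM ▸ pf_natDegree M c v
      omega
    omega
  have hcoeff : (pp (M+1)).coeff (M+2) = -2*c := by
    rw [hPP, coeff_add]
    have e1 : (X * qq (M+1)).coeff (M+2) = c' := by
      rw [show M+2 = (M+1)+1 from rfl, coeff_X_mul, hqL, pf_coeff]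
    have e2 : (C ((M:ℝ)+1) * ((1+X^2) * qq M)).coeff (M+2) = ((M:ℝ)+1) * c := by
      rw [coeff_C_mul, show ((1:Polynomial ℝ)+X^2) * qq M = qq M + X^2 * qq M by ring, coeff_add]
      rw [coeff_eq_zero_of_natDegree_lt (lt_of_le_of_lt (hqM ▸ pf_natDegree M c v) (by omega))]
      rw [coeff_X_pow_mul (qq M) 2 M, hqM, pf_coeff]
      ring
    rw [e1, e2, hc'val]
    ring
  have ha0 : (-2*c : ℝ) ≠ 0 := by
    intro h; apply hc0; nlinarith
  -- sign conditions at the roots of qq (M+1)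
  have hsign : ∀ j : Fin (M+1), 0 < (-2*c) * (pp (M+1)).eval (wv j) * (-1:ℝ)^((M+1) - (j:ℕ)) := by
    intro j
    have hzero : (qq (M+1)).eval (wv j) = 0 := by
      rw [hqL]
      simp only [eval_mul, eval_C, eval_prod, eval_sub, eval_X]
      rw [Finset.prod_eq_zero (Finset.mem_univ j) (by simp)]
      ring
    have heval : (pp (M+1)).eval (wv j)
        = ((M:ℝ)+1) * ((1 + (wv j)^2) * (c * ∏ i, (wv j - v i))) := by
      rw [hPP]
      simp only [eval_add, eval_mul, eval_C, eval_X, eval_one, eval_pow, hzero]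
      rw [hqM]
      simp only [eval_mul, eval_C, eval_prod, eval_sub, eval_X]
      ring
    have key : ∀ i : Fin M, wv j < v i ↔ (j:ℕ) ≤ (i:ℕ) := by
      intro i
      constructor
      · intro h
        by_contra hcon
        push_neg at hcon
        have h1 : v i < wv i.succ := (hint i).2
        have h2 : wv i.succ ≤ wv j := hwv.monotone (by rw [Fin.le_def]; simp; omega)
        linarith
      · intro h
        have h1 : wv j ≤ wv i.castSucc := hwv.monotone (by rw [Fin.le_def]; simp; omega)
        have h2 : wv i.castSucc < v i := (hint i).1
        linarith
    have hne : ∀ i ∈ (Finset.univ : Finset (Fin M)), wv j - v i ≠ 0 := by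
      intro i _ hh
      rw [sub_eq_zero] at hh
      rcases Nat.lt_or_ge (i:ℕ) (j:ℕ) with h | h
      · have h1 : v i < wv i.succ := (hint i).2
        have h2 : wv i.succ ≤ wv j := hwv.monotone (by rw [Fin.le_def]; simp; omega)
        linarith [hh.le, hh.ge]
      · have h3 := (key i).2 h
        linarith [hh.le]
    have hps := prod_sign Finset.univ (fun i => wv j - v i) hne
    have hcount : (Finset.univ.filter (fun i : Fin M => wv j - v i < 0))
        = Finset.univ.filter (fun i : Fin M => (j:ℕ) ≤ (i:ℕ)) := by
      ext i
      simp [sub_neg, key i]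
    rw [hcount, card_filter_le_fin] at hps
    rw [heval]
    have hx : (-1:ℝ)^(M+1-(j:ℕ)) = -(-1:ℝ)^(M-(j:ℕ)) := by
      rw [show M+1-(j:ℕ) = (M-(j:ℕ))+1 by omega, pow_succ]
      ring
    rw [hx]
    have hM1 : (0:ℝ) < (M:ℝ)+1 := by positivity
    have hw2 : (0:ℝ) < 1 + (wv j)^2 := by positivity
    nlinarith [mul_pos (mul_pos hM1 hw2) (mul_pos (mul_self_pos.2 hc0) hps)]
  obtain ⟨z, hz1, hz2, hz3⟩ := core (M+1) (pp (M+1)) (-2*c) ha0 hdeg hcoeff wv hwv hsign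
  constructor
  · rintro x ⟨hp0, hq0⟩
    rw [hQeq, hqL] at hq0
    simp only [eval_mul, eval_C, eval_prod, eval_sub, eval_X, mul_eq_zero,
      Finset.prod_eq_zero_iff, sub_eq_zero] at hq0
    rcases hq0 with h | ⟨i, _, rfl⟩
    · exact hc'0 h
    · have := hsign i
      rw [hPeq] at hp0
      rw [hp0] at this
      simp at this
  · refine ⟨z, wv, hz1, hwv, ?_, ?_, hz3⟩
    · intro t
      rw [hPeq, hz2]
      simp only [eval_mul, eval_C, eval_prod, eval_sub, eval_X, mul_eq_zero,
        Finset.prod_eq_zero_iff, sub_eq_zero, Finset.mem_univ, true_and]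
      constructor
      · rintro (h | h)
        · rcases h with h | h
          · norm_num at h
          · exact absurd h hc0
        · exact h
      · intro h
        exact Or.inr h
    · intro t
      rw [hQeq, hqL]
      simp only [eval_mul, eval_C, eval_prod, eval_sub, eval_X, mul_eq_zero,
        Finset.prod_eq_zero_iff, sub_eq_zero, Finset.mem_univ, true_and]
      constructor
      · rintro (h | h)
        · exact absurd h hc'0
        · exact h
      · intro h
        exact Or.inr h
end

section
/- Define B_L(x) as the L-th derivative of (x^2+1)^{-3/2} and C_L(x) as the L-th derivative of x^{L+2}(x^2+1)^{-3/2}. Then for every integer L >= 0 and every nonzero real x, sgn(x) * x^{L+1} * B_L(x) = (-1)^L * C_L(1/x). -/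
noncomputable def myfB : ℝ → ℝ := fun t => (t ^ 2 + 1) ^ (-(3:ℝ)/2)

lemma myfB_contDiff : ContDiff ℝ (⊤ : ℕ∞) myfB := by
  apply ContDiff.rpow_const_of_ne
  · exact (contDiff_id.pow 2).add contDiff_const
  · intro t; positivity

lemma myu_contDiff (k : ℕ) : ContDiff ℝ (⊤ : ℕ∞) (fun t : ℝ => t ^ k * myfB t) :=
  (contDiff_id.pow k).mul myfB_contDiff

lemma my_diff (u : ℝ → ℝ) (hu : ContDiff ℝ (⊤ : ℕ∞) u) (m : ℕ) :
    Differentiable ℝ (iteratedDeriv m u) :=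
  hu.differentiable_iteratedDeriv m (by exact_mod_cast lt_top_iff_ne_top.mpr (by simp))

lemma my_leib (u : ℝ → ℝ) (hu : ContDiff ℝ (⊤ : ℕ∞) u) :
    ∀ (n : ℕ) (x : ℝ), iteratedDeriv (n+1) (fun t => t * u t) x
      = x * iteratedDeriv (n+1) u x + ((n:ℝ)+1) * iteratedDeriv n u x := by
  intro n
  induction n with
  | zero =>
    intro x
    rw [iteratedDeriv_one, iteratedDeriv_one, iteratedDeriv_zero,
      deriv_fun_mul differentiableAt_fun_id ((hu.differentiable (by simp)) x), deriv_id'']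
    ring
  | succ n ih =>
    intro x
    rw [iteratedDeriv_succ]
    rw [funext ih]
    have h1 : DifferentiableAt ℝ (iteratedDeriv (n+1) u) x := my_diff u hu (n+1) x
    have h2 : DifferentiableAt ℝ (iteratedDeriv n u) x := my_diff u hu n x
    rw [deriv_fun_add ((differentiableAt_fun_id).fun_mul h1) (h2.const_mul _),
      deriv_fun_mul differentiableAt_fun_id h1, deriv_const_mul _ h2, deriv_id'',
      ← iteratedDeriv_succ, ← iteratedDeriv_succ]
    push_cast
    ring

lemma my_base (x : ℝ) (hx : x ≠ 0) :
    Real.sign x * x * (x ^ 2 + 1) ^ (-(3:ℝ)/2)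
      = (1/x) ^ 2 * ((1/x) ^ 2 + 1) ^ (-(3:ℝ)/2) := by
  have hx2 : (x:ℝ)^2 ≠ 0 := pow_ne_zero 2 hx
  have h1 : ((1/x) ^ 2 + 1 : ℝ) = (x^2+1) * (x^2)⁻¹ := by field_simp; ring
  rw [h1, Real.mul_rpow (by positivity) (by positivity),
    Real.inv_rpow (by positivity), ← Real.rpow_neg_one ((x^2) ^ (-(3:ℝ)/2)),
    ← Real.rpow_mul (sq_nonneg x)]
  have h3 : (-(3:ℝ)/2) * (-1 : ℝ) = 3/2 := by norm_num
  rw [h3]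
  have h4 : (x^2 : ℝ) ^ ((3:ℝ)/2) = |x| ^ (3:ℕ) := by
    rw [← sq_abs, ← Real.rpow_natCast |x| 2, ← Real.rpow_mul (abs_nonneg x)]
    norm_num
  rw [h4]
  have hs : Real.sign x * x = |x| := by
    rcases hx.lt_or_gt with h | h
    · rw [Real.sign_of_neg h, abs_of_neg h]; ring
    · rw [Real.sign_of_pos h, abs_of_pos h]; ring
  have h5 : (1/x)^2 = (|x|^2)⁻¹ := by rw [sq_abs, one_div, inv_pow]
  rw [hs, h5]
  have habs : |x| ≠ 0 := abs_ne_zero.mpr hx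
  field_simp

lemma my_key : ∀ (L : ℕ) (x : ℝ), x ≠ 0 →
    Real.sign x * x ^ (L + 1) * iteratedDeriv L myfB x
      = (-1 : ℝ) ^ L * iteratedDeriv L (fun t : ℝ => t ^ (L + 2) * myfB t) (1 / x) := by
  intro L
  induction L with
  | zero =>
    intro x hx
    simpa [myfB, iteratedDeriv_zero] using my_base x hx
  | succ n ih =>
    intro x hx
    set u : ℝ → ℝ := fun t => t ^ (n + 2) * myfB t with hu_def
    have hu : ContDiff ℝ (⊤ : ℕ∞) u := myu_contDiff (n+2)
    set Bn : ℝ → ℝ := iteratedDeriv n myfB with hBn_def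
    set g : ℝ → ℝ := iteratedDeriv n u with hg_def
    -- rewrite the (n+1)-integrand
    have hfun : (fun t : ℝ => t ^ (n + 1 + 2) * myfB t) = fun t => t * u t := by
      funext t; simp only [hu_def]; ring
    rw [hfun, my_leib u hu n (1/x)]
    -- eventual equality from IH
    have hnb : ∀ᶠ y in nhds x, y ≠ 0 ∧ Real.sign y = Real.sign x := by
      rcases hx.lt_or_gt with h | h
      · filter_upwards [isOpen_Iio.eventually_mem (Set.mem_Iio.mpr h)] with y hy
        exact ⟨ne_of_lt hy, by rw [Real.sign_of_neg hy, Real.sign_of_neg h]⟩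
      · filter_upwards [isOpen_Ioi.eventually_mem (Set.mem_Ioi.mpr h)] with y hy
        exact ⟨ne_of_gt hy, by rw [Real.sign_of_pos hy, Real.sign_of_pos h]⟩
    have hEq : (fun y => Real.sign x * (y ^ (n+1) * Bn y))
        =ᶠ[nhds x] (fun y => (-1:ℝ)^n * g (1/y)) := by
      filter_upwards [hnb] with y hy
      rw [← hy.2, ← mul_assoc]
      exact ih y hy.1
    have hder := hEq.deriv_eq
    -- compute LHS derivative
    have hBdiff : DifferentiableAt ℝ Bn x := my_diff myfB myfB_contDiff n x
    have hL : deriv (fun y => Real.sign x * (y ^ (n+1) * Bn y)) x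
        = Real.sign x * (((n:ℝ)+1) * x ^ n * Bn x + x ^ (n+1) * deriv Bn x) := by
      rw [deriv_const_mul _ ((differentiableAt_pow (n+1)).fun_mul hBdiff),
        deriv_fun_mul (differentiableAt_pow (n+1)) hBdiff, deriv_pow_field]
      push_cast
      ring
    -- compute RHS derivative
    have hgdiff : Differentiable ℝ g := my_diff u hu n
    have hcomp : HasDerivAt (fun y : ℝ => g (1/y)) (deriv g (1/x) * -(x^2)⁻¹) x := by
      simpa [one_div, Function.comp_def] using
        ((hgdiff x⁻¹).hasDerivAt.comp x (hasDerivAt_inv hx))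
    have hR : deriv (fun y => (-1:ℝ)^n * g (1/y)) x
        = (-1:ℝ)^n * (deriv g (1/x) * -(x^2)⁻¹) := by
      rw [deriv_const_mul _ hcomp.differentiableAt]
      rw [hcomp.deriv]
    rw [hL, hR] at hder
    -- the goal
    have hih := ih x hx
    rw [iteratedDeriv_succ, ← hBn_def]
    rw [iteratedDeriv_succ, ← hg_def]
    have hx2 : (x:ℝ)^2 ≠ 0 := pow_ne_zero 2 hx
    field_simp at hder hih ⊢
    linear_combination hder - ((n:ℝ)+1) * x * hih

theorem stmt_11 (L : ℕ) (x : ℝ) (hx : x ≠ 0) :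
    Real.sign x * x ^ (L + 1) *
        iteratedDeriv L (fun t : ℝ => (t ^ 2 + 1) ^ (-(3:ℝ)/2)) x
      = (-1 : ℝ) ^ L *
        iteratedDeriv L (fun t : ℝ => t ^ (L + 2) * (t ^ 2 + 1) ^ (-(3:ℝ)/2)) (1 / x) := by
  exact my_key L x hx
end

section
/- Define C_L(x) as the L-th derivative of x^{L+2}(x^2+1)^{-3/2} and D_L(x) as the L-th derivative of x^{L+1}(x^2+1)^{-3/2}. Then for every integer L >= 0, C_L and D_L have no common zero other than possibly x = 0. -/
open Real

/-- `uu a t = t^a (t²+1)^{-3/2}`. -/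
noncomputable def uu (a : ℕ) : ℝ → ℝ := fun t => t ^ a * (t ^ 2 + 1) ^ (-(3:ℝ)/2)

lemma sq1_pos (t : ℝ) : (0:ℝ) < t ^ 2 + 1 := by positivity

lemma rp_pos (t : ℝ) : (0:ℝ) < (t ^ 2 + 1) ^ (-(3:ℝ)/2) :=
  Real.rpow_pos_of_pos (sq1_pos t) _

lemma hid (x : ℝ) : HasDerivAt (fun y : ℝ => y) 1 x := hasDerivAt_id x

lemma smooth_uu (a : ℕ) : ContDiff ℝ (⊤:ℕ∞) (uu a) := by
  rw [contDiff_iff_contDiffAt]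
  intro t
  exact (contDiff_id.pow a).contDiffAt.mul
    ((((contDiff_id.pow 2).add contDiff_const).contDiffAt).rpow_const_of_ne
      (ne_of_gt (sq1_pos t)))

lemma iterHasDeriv {g : ℝ → ℝ} (hg : ContDiff ℝ (⊤:ℕ∞) g) (k : ℕ) (x : ℝ) :
    HasDerivAt (iteratedDeriv k g) (iteratedDeriv (k+1) g x) x := by
  have h : Differentiable ℝ (iteratedDeriv k g) :=
    hg.differentiable_iteratedDeriv k (by exact_mod_cast WithTop.coe_lt_coe.mpr (WithTop.coe_lt_top k))
  have h2 := (h x).hasDerivAt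
  rw [iteratedDeriv_succ]
  exact h2

lemma uu_succ (a : ℕ) : uu (a+1) = fun t => t * uu a t := by
  funext t
  unfold uu
  rw [pow_succ]
  ring

lemma derivZero {F : ℝ → ℝ} (hF : ∀ y, F y = 0) {x d : ℝ} (h : HasDerivAt F d x) : d = 0 := by
  have hF' : F = fun _ => 0 := funext hF
  rw [hF'] at h
  exact h.unique (hasDerivAt_const x 0)

lemma mulX {g : ℝ → ℝ} (hg : ContDiff ℝ (⊤:ℕ∞) g) (n : ℕ) :
    ∀ x : ℝ, iteratedDeriv (n+1) (fun t => t * g t) x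
      = x * iteratedDeriv (n+1) g x + ((n:ℝ)+1) * iteratedDeriv n g x := by
  induction n with
  | zero =>
    intro x
    have h0 : HasDerivAt g (iteratedDeriv 1 g x) x := by
      simpa using iterHasDeriv hg 0 x
    have h : HasDerivAt (fun t => t * g t) (1 * g x + x * iteratedDeriv 1 g x) x :=
      (hid x).mul h0
    rw [iteratedDeriv_one, h.deriv, iteratedDeriv_zero]
    push_cast
    ring
  | succ n IH =>
    intro x
    have hfun : iteratedDeriv (n+1) (fun t => t * g t)
        = fun y => y * iteratedDeriv (n+1) g y + ((n:ℝ)+1) * iteratedDeriv n g y := funext IH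
    rw [iteratedDeriv_succ, hfun]
    have h : HasDerivAt (fun y => y * iteratedDeriv (n+1) g y + ((n:ℝ)+1) * iteratedDeriv n g y)
        (1 * iteratedDeriv (n+1) g x + x * iteratedDeriv (n+2) g x
          + ((n:ℝ)+1) * iteratedDeriv (n+1) g x) x :=
      ((hid x).mul (iterHasDeriv hg (n+1) x)).add
        ((iterHasDeriv hg n x).const_mul ((n:ℝ)+1))
    rw [h.deriv]
    push_cast
    ring

lemma baseId (a : ℕ) (t : ℝ) :
    (t^3+t) * iteratedDeriv 1 (uu a) t - (((a:ℝ)-3) * t^2 + a) * iteratedDeriv 0 (uu a) t = 0 := by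
  have h1 : HasDerivAt (fun y : ℝ => y ^ a) ((a:ℝ) * t ^ (a-1)) t := hasDerivAt_pow a t
  have h2 : HasDerivAt (fun y : ℝ => y ^ 2 + 1) (2*t) t := by
    simpa using (hasDerivAt_pow 2 t).add_const 1
  have h3 := h2.rpow_const (p := -(3:ℝ)/2) (Or.inl (ne_of_gt (sq1_pos t)))
  have h4 : HasDerivAt (uu a)
      ((a:ℝ) * t ^ (a-1) * (t ^ 2 + 1) ^ (-(3:ℝ)/2)
        + t ^ a * (2*t * (-(3:ℝ)/2) * (t ^ 2 + 1) ^ (-(3:ℝ)/2 - 1))) t := h1.mul h3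
  rw [iteratedDeriv_one, iteratedDeriv_zero, h4.deriv]
  have e1 : t * ((a:ℝ) * t ^ (a-1)) = (a:ℝ) * t ^ a := by
    cases a with
    | zero => simp
    | succ n => rw [pow_succ]; push_cast; ring
  have e2 : (t ^ 2 + 1) * (t ^ 2 + 1) ^ (-(3:ℝ)/2 - 1) = (t ^ 2 + 1) ^ (-(3:ℝ)/2) := by
    have h := Real.rpow_add (sq1_pos t) 1 (-(3:ℝ)/2 - 1)
    rw [Real.rpow_one] at h
    rw [← h]
    norm_num
  show (t^3+t) * _ - (((a:ℝ)-3) * t^2 + a) * uu a t = 0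
  unfold uu
  linear_combination ((t^2+1) * ((t^2+1) ^ (-(3:ℝ)/2))) * e1 + (-3*t^2*t^a) * e2

lemma oneDeriv (a : ℕ) (x : ℝ) :
    (x^3+x) * iteratedDeriv 2 (uu a) x
    + ((3 - ((a:ℝ)-3)) * x^2 + (1 - (a:ℝ))) * iteratedDeriv 1 (uu a) x
    - 2*((a:ℝ)-3)*x * iteratedDeriv 0 (uu a) x = 0 := by
  have hs := smooth_uu a
  have T1 : HasDerivAt (fun y => (y^3+y) * iteratedDeriv 1 (uu a) y)
      (((3:ℝ)*x^(3-1) + 1) * iteratedDeriv 1 (uu a) x + (x^3+x) * iteratedDeriv 2 (uu a) x) x :=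
    ((hasDerivAt_pow 3 x).add (hid x)).mul (iterHasDeriv hs 1 x)
  have T2 : HasDerivAt (fun y => (((a:ℝ)-3) * y^2 + (a:ℝ)) * iteratedDeriv 0 (uu a) y)
      ((((a:ℝ)-3) * ((2:ℝ)*x^(2-1))) * iteratedDeriv 0 (uu a) x
        + (((a:ℝ)-3) * x^2 + (a:ℝ)) * iteratedDeriv 1 (uu a) x) x :=
    (((hasDerivAt_pow 2 x).const_mul ((a:ℝ)-3)).add_const (a:ℝ)).mul (iterHasDeriv hs 0 x)
  have key := derivZero (baseId a) (T1.sub T2)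
  linear_combination key

lemma fourTerm (a n : ℕ) (x : ℝ) :
    (x^3+x) * iteratedDeriv (n+3) (uu a) x
    + ((3*((n:ℝ)+2) - ((a:ℝ)-3)) * x^2 + (((n:ℝ)+2) - (a:ℝ))) * iteratedDeriv (n+2) (uu a) x
    + (3*((n:ℝ)+2)*((n:ℝ)+1) - 2*((a:ℝ)-3)*((n:ℝ)+2)) * x * iteratedDeriv (n+1) (uu a) x
    + (((n:ℝ)+2)*((n:ℝ)+1)*(n:ℝ) - ((a:ℝ)-3)*((n:ℝ)+2)*((n:ℝ)+1)) * iteratedDeriv n (uu a) x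
    = 0 := by
  have hs := smooth_uu a
  induction n generalizing x with
  | zero =>
    have T1 : HasDerivAt (fun y => (y^3+y) * iteratedDeriv 2 (uu a) y)
        (((3:ℝ)*x^(3-1) + 1) * iteratedDeriv 2 (uu a) x + (x^3+x) * iteratedDeriv 3 (uu a) x) x :=
      ((hasDerivAt_pow 3 x).add (hid x)).mul (iterHasDeriv hs 2 x)
    have T2 : HasDerivAt (fun y => ((3 - ((a:ℝ)-3)) * y^2 + (1 - (a:ℝ))) * iteratedDeriv 1 (uu a) y)
        (((3 - ((a:ℝ)-3)) * ((2:ℝ)*x^(2-1))) * iteratedDeriv 1 (uu a) x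
          + ((3 - ((a:ℝ)-3)) * x^2 + (1 - (a:ℝ))) * iteratedDeriv 2 (uu a) x) x :=
      (((hasDerivAt_pow 2 x).const_mul ((3:ℝ) - ((a:ℝ)-3))).add_const ((1:ℝ) - (a:ℝ))).mul
        (iterHasDeriv hs 1 x)
    have T3 : HasDerivAt (fun y => 2*((a:ℝ)-3)*y * iteratedDeriv 0 (uu a) y)
        ((2*((a:ℝ)-3)*1) * iteratedDeriv 0 (uu a) x
          + 2*((a:ℝ)-3)*x * iteratedDeriv 1 (uu a) x) x :=
      ((hid x).const_mul (2*((a:ℝ)-3))).mul (iterHasDeriv hs 0 x)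
    have key := derivZero (oneDeriv a) ((T1.add T2).sub T3)
    push_cast
    linear_combination key
  | succ n IH =>
    have T1 : HasDerivAt (fun y => (y^3+y) * iteratedDeriv (n+3) (uu a) y)
        (((3:ℝ)*x^(3-1) + 1) * iteratedDeriv (n+3) (uu a) x
          + (x^3+x) * iteratedDeriv (n+4) (uu a) x) x :=
      ((hasDerivAt_pow 3 x).add (hid x)).mul (iterHasDeriv hs (n+3) x)
    have T2 : HasDerivAt
        (fun y => ((3*((n:ℝ)+2) - ((a:ℝ)-3)) * y^2 + (((n:ℝ)+2) - (a:ℝ))) * iteratedDeriv (n+2) (uu a) y)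
        (((3*((n:ℝ)+2) - ((a:ℝ)-3)) * ((2:ℝ)*x^(2-1))) * iteratedDeriv (n+2) (uu a) x
          + ((3*((n:ℝ)+2) - ((a:ℝ)-3)) * x^2 + (((n:ℝ)+2) - (a:ℝ))) * iteratedDeriv (n+3) (uu a) x) x :=
      (((hasDerivAt_pow 2 x).const_mul (3*((n:ℝ)+2) - ((a:ℝ)-3))).add_const (((n:ℝ)+2) - (a:ℝ))).mul
        (iterHasDeriv hs (n+2) x)
    have T3 : HasDerivAt
        (fun y => (3*((n:ℝ)+2)*((n:ℝ)+1) - 2*((a:ℝ)-3)*((n:ℝ)+2)) * y * iteratedDeriv (n+1) (uu a) y)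
        (((3*((n:ℝ)+2)*((n:ℝ)+1) - 2*((a:ℝ)-3)*((n:ℝ)+2)) * 1) * iteratedDeriv (n+1) (uu a) x
          + (3*((n:ℝ)+2)*((n:ℝ)+1) - 2*((a:ℝ)-3)*((n:ℝ)+2)) * x * iteratedDeriv (n+2) (uu a) x) x :=
      ((hid x).const_mul (3*((n:ℝ)+2)*((n:ℝ)+1) - 2*((a:ℝ)-3)*((n:ℝ)+2))).mul
        (iterHasDeriv hs (n+1) x)
    have T4 : HasDerivAt
        (fun y => (((n:ℝ)+2)*((n:ℝ)+1)*(n:ℝ) - ((a:ℝ)-3)*((n:ℝ)+2)*((n:ℝ)+1)) * iteratedDeriv n (uu a) y)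
        ((((n:ℝ)+2)*((n:ℝ)+1)*(n:ℝ) - ((a:ℝ)-3)*((n:ℝ)+2)*((n:ℝ)+1)) * iteratedDeriv (n+1) (uu a) x) x :=
      (iterHasDeriv hs n x).const_mul _
    have key := derivZero (fun y => IH y) (((T1.add T2).add T3).add T4)
    rw [show n+1+3 = n+4 from rfl, show n+1+2 = n+3 from rfl, show n+1+1 = n+2 from rfl]
    push_cast
    linear_combination key

lemma relR (m : ℕ) (x : ℝ) :
    x*(x^2+1) * iteratedDeriv (m+2) (uu (m+2)) x
    + ((2*(m:ℝ)+4)*x^2 - 1) * iteratedDeriv (m+1) (uu (m+2)) x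
    + ((m:ℝ)+1)*((m:ℝ)+2)*x * iteratedDeriv m (uu (m+2)) x = 0 := by
  cases m with
  | zero =>
    have h := oneDeriv 2 x
    push_cast at h ⊢
    linear_combination h
  | succ k =>
    have h := fourTerm (k+3) k x
    rw [show k+1+2 = k+3 from rfl, show k+1+1 = k+2 from rfl]
    push_cast at h ⊢
    linear_combination h

theorem stmt_12 (L : ℕ) (x : ℝ) (hx : x ≠ 0) :
    ¬(iteratedDeriv L (fun t : ℝ => t ^ (L + 2) * (t ^ 2 + 1) ^ (-(3:ℝ)/2)) x = 0 ∧
      iteratedDeriv L (fun t : ℝ => t ^ (L + 1) * (t ^ 2 + 1) ^ (-(3:ℝ)/2)) x = 0) := by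
  have key : ∀ L : ℕ, ¬(iteratedDeriv L (uu (L+2)) x = 0 ∧ iteratedDeriv L (uu (L+1)) x = 0) := by
    intro L
    induction L with
    | zero =>
      rintro ⟨h1, -⟩
      rw [iteratedDeriv_zero] at h1
      have h2 : x ^ 2 * (x ^ 2 + 1) ^ (-(3:ℝ)/2) = 0 := by simpa [uu] using h1
      exact (mul_ne_zero (pow_ne_zero 2 hx) (ne_of_gt (rp_pos x))) h2
    | succ L IH =>
      rintro ⟨hC, hD⟩
      rw [show L+1+2 = L+3 from rfl] at hC
      rw [show L+1+1 = L+2 from rfl] at hD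
      -- hC : C_{L+1} = 0, hD : D_{L+1} = 0
      have h1 := mulX (smooth_uu (L+2)) L x
      rw [← uu_succ (L+2)] at h1
      rw [show L+2+1 = L+3 from rfl] at h1
      have hCL : iteratedDeriv L (uu (L+2)) x = 0 := by
        have h9 : ((L:ℝ)+1) * iteratedDeriv L (uu (L+2)) x = 0 := by
          linear_combination hC - h1 - x * hD
        have hL1 : ((L:ℝ)+1) ≠ 0 := by positivity
        exact (mul_eq_zero.mp h9).resolve_left hL1
      cases L with
      | zero =>
        rw [iteratedDeriv_zero] at hCL
        have h2 : x ^ 2 * (x ^ 2 + 1) ^ (-(3:ℝ)/2) = 0 := by simpa [uu] using hCL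
        exact (mul_ne_zero (pow_ne_zero 2 hx) (ne_of_gt (rp_pos x))) h2
      | succ M =>
        rw [show M+1+2 = M+3 from rfl] at hCL IH
        rw [show M+1+1 = M+2 from rfl] at IH
        have e1 := mulX (smooth_uu (M+2)) M x
        rw [← uu_succ (M+2), show M+2+1 = M+3 from rfl] at e1
        have eq1 : x * iteratedDeriv (M+1) (uu (M+2)) x
            + ((M:ℝ)+1) * iteratedDeriv M (uu (M+2)) x = 0 := by
          linear_combination hCL - e1
        have e2 := mulX (smooth_uu (M+2)) (M+1) x
        rw [← uu_succ (M+2), show M+2+1 = M+3 from rfl, show M+1+1 = M+2 from rfl] at e2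
        have eq2 : x * iteratedDeriv (M+2) (uu (M+2)) x
            + ((M:ℝ)+2) * iteratedDeriv (M+1) (uu (M+2)) x = 0 := by
          push_cast at e2
          linear_combination hD - e2
        have h9 : ((M:ℝ)+3) * iteratedDeriv (M+1) (uu (M+2)) x = 0 := by
          linear_combination (x^2+1) * eq2 + ((M:ℝ)+2) * x * eq1 - relR M x
        have hM3 : ((M:ℝ)+3) ≠ 0 := by positivity
        have hDL : iteratedDeriv (M+1) (uu (M+2)) x = 0 :=
          (mul_eq_zero.mp h9).resolve_left hM3
        exact IH ⟨hCL, hDL⟩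
  exact key L
end

section
/- Let a_1,...,a_M be reals, 0 < x_1 < ... < x_M, and let mu_u = (-1)^u sum_j a_j x_j^u with mu_u = 0 for 0 <= u < L and mu_L != 0. Define Y(x,y) = sum_{j=1}^M a_j y /((x-x_j)^2+y^2)^{3/2}. Fix delta in (0,1/2). If (p_m, q_m) is a sequence with Y(p_m,q_m) = 0, |p_m/q_m| < 1 - delta, q_m != 0, and p_m/q_m converges to beta while |q_m| tends to infinity, then the L-th derivative of the function z -> (1+z^2)^{-3/2} vanishes at z = beta. -/
open Filter Finset Set Real

private lemma fsmooth : ContDiff ℝ (⊤ : ℕ∞) (fun z : ℝ => (1 + z ^ 2) ^ (-(3:ℝ)/2)) := by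
  rw [contDiff_iff_contDiffAt]
  intro z
  have h1 : ContDiffAt ℝ (⊤ : ℕ∞) (fun z : ℝ => 1 + z ^ 2) z := by fun_prop
  have h2 : (1 : ℝ) + z ^ 2 ≠ 0 := by positivity
  exact h1.rpow_const_of_ne h2

private lemma iterWithin {f : ℝ → ℝ} (hf : ContDiff ℝ (⊤ : ℕ∞) f) {s : Set ℝ}
    (hs : UniqueDiffOn ℝ s) (n : ℕ) :
    ∀ x ∈ s, iteratedDerivWithin n f s x = iteratedDeriv n f x := by
  induction n with
  | zero => intro x hx; simp
  | succ n ih =>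
    intro x hx
    rw [iteratedDerivWithin_succ, iteratedDeriv_succ]
    rw [derivWithin_congr (fun y hy => ih y hy) (ih x hx)]
    exact ((hf.differentiable_iteratedDeriv n (by exact_mod_cast WithTop.coe_lt_top n)) x).derivWithin (hs x hx)

private lemma iter_comp {f : ℝ → ℝ} (hf : ContDiff ℝ (⊤ : ℕ∞) f) (t h : ℝ) (n : ℕ) (y : ℝ) :
    iteratedDeriv n (fun s => f (t - h * s)) y = (-h) ^ n * iteratedDeriv n f (t - h * y) := by
  have e1 : (fun s : ℝ => f (t - h * s)) = fun s : ℝ => (fun z => f (z + t)) ((-h) * s) := by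
    funext s
    show f _ = f _
    congr 1
    ring
  have hF : ContDiff ℝ (n : ℕ∞) (fun z : ℝ => f (z + t)) :=
    (hf.of_le (by exact_mod_cast le_top)).comp (by fun_prop)
  rw [e1, iteratedDeriv_comp_const_mul hF (-h)]
  rw [iteratedDeriv_comp_add_const n f t]
  congr 1
  ring

private lemma rem_bound {f : ℝ → ℝ} (hf : ContDiff ℝ (⊤ : ℕ∞) f) (L : ℕ) (C : ℝ)
    (hC : ∀ y ∈ Set.Icc (-2:ℝ) 2, |iteratedDeriv (L+1) f y| ≤ C)
    (t h : ℝ) (ht : |t| ≤ 1) (hh : |h| ≤ 1) :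
    |f (t - h) - ∑ u ∈ Finset.range (L+1), iteratedDeriv u f t * (-h)^u / (Nat.factorial u : ℝ)| ≤
      C * |h|^(L+1) / (Nat.factorial L : ℝ) := by
  set g : ℝ → ℝ := fun s => f (t - h * s) with hg
  have hgC : ContDiff ℝ (⊤ : ℕ∞) g := hf.comp (by fun_prop)
  have hud : UniqueDiffOn ℝ (Set.Icc (0:ℝ) 1) := uniqueDiffOn_Icc one_pos
  have hCd : ∀ y ∈ Set.Icc (0:ℝ) 1,
      ‖iteratedDerivWithin (L+1) g (Set.Icc (0:ℝ) 1) y‖ ≤ C * |h|^(L+1) := by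
    intro y hy
    rw [iterWithin hgC hud (L+1) y hy, Real.norm_eq_abs, iter_comp hf t h (L+1) y,
      abs_mul, abs_pow, abs_neg]
    have hmem : t - h * y ∈ Set.Icc (-2:ℝ) 2 := by
      have h1 : |t - h * y| ≤ 2 := by
        calc |t - h * y| ≤ |t| + |h * y| := abs_sub _ _
        _ ≤ 1 + 1 := by
            refine add_le_add ht ?_
            rw [abs_mul]
            have hy1 : |y| ≤ 1 := by
              rw [abs_le]; exact ⟨by linarith [hy.1], hy.2⟩
            calc |h| * |y| ≤ 1 * 1 := mul_le_mul hh hy1 (abs_nonneg _) zero_le_one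
            _ = 1 := by ring
        _ = 2 := by ring
      exact abs_le.mp h1
    calc |h|^(L+1) * |iteratedDeriv (L+1) f (t - h * y)| ≤ |h|^(L+1) * C :=
          mul_le_mul_of_nonneg_left (hC _ hmem) (by positivity)
    _ = C * |h|^(L+1) := by ring
  have key := taylor_mean_remainder_bound (f := g) (a := 0) (b := 1) (x := 1) (n := L)
    zero_le_one ((hgC.of_le (by exact_mod_cast le_top)).contDiffOn) (Set.right_mem_Icc.mpr zero_le_one) hCd
  have hg1 : g 1 = f (t - h) := by simp [hg]
  have htay : taylorWithinEval g L (Set.Icc (0:ℝ) 1) 0 1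
      = ∑ u ∈ Finset.range (L+1), iteratedDeriv u f t * (-h)^u / (Nat.factorial u : ℝ) := by
    rw [taylor_within_apply]
    refine Finset.sum_congr rfl fun k _ => ?_
    rw [iterWithin hgC hud k 0 (Set.left_mem_Icc.mpr zero_le_one), iter_comp hf t h k 0]
    rw [mul_zero, sub_zero, smul_eq_mul]
    rw [div_eq_mul_inv]
    ring
  rw [hg1, htay] at key
  calc |f (t - h) - ∑ u ∈ Finset.range (L+1), iteratedDeriv u f t * (-h)^u / (Nat.factorial u : ℝ)|
      ≤ C * |h|^(L+1) * (1 - 0)^(L+1) / (Nat.factorial L : ℝ) := key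
    _ = C * |h|^(L+1) / (Nat.factorial L : ℝ) := by norm_num

theorem stmt_19 (M L : ℕ) (a x : Fin M → ℝ) (hx0 : ∀ j, 0 < x j)
    (hxmono : StrictMono x)
    (μ : ℕ → ℝ) (hμdef : ∀ u, μ u = (-1 : ℝ) ^ u * ∑ j, a j * x j ^ u)
    (hμ0 : ∀ u < L, μ u = 0) (hμL : μ L ≠ 0)
    (δ : ℝ) (hδ : δ ∈ Set.Ioo (0:ℝ) (1/2))
    (p q : ℕ → ℝ) (β : ℝ)
    (hY : ∀ m, ∑ j, a j * q m / ((p m - x j) ^ 2 + q m ^ 2) ^ ((3:ℝ)/2) = 0)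
    (hq : ∀ m, q m ≠ 0)
    (hratio : ∀ m, |p m / q m| < 1 - δ)
    (hlim : Filter.Tendsto (fun m => p m / q m) Filter.atTop (nhds β))
    (hqinf : Filter.Tendsto (fun m => |q m|) Filter.atTop Filter.atTop) :
    iteratedDeriv L (fun z : ℝ => (1 + z ^ 2) ^ (-(3:ℝ)/2)) β = 0 := by
  set f : ℝ → ℝ := fun z : ℝ => (1 + z ^ 2) ^ (-(3:ℝ)/2) with hfdef
  have hf : ContDiff ℝ (⊤ : ℕ∞) f := fsmooth
  -- bound on the (L+1)-st derivative on [-2,2]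
  obtain ⟨C, hC⟩ : ∃ C, ∀ y ∈ Set.Icc (-2:ℝ) 2, |iteratedDeriv (L+1) f y| ≤ C := by
    obtain ⟨C, hC⟩ := (isCompact_Icc (a := (-2:ℝ)) (b := 2)).exists_bound_of_continuousOn
      (hf.continuous_iteratedDeriv (L+1) (by exact_mod_cast le_top)).continuousOn
    exact ⟨C, fun y hy => by simpa using hC y hy⟩
  have hC0 : 0 ≤ C := (abs_nonneg _).trans (hC 0 (by norm_num))
  set K : ℝ := ∑ j, |a j| * x j ^ (L+1) with hK
  have hK0 : 0 ≤ K := Finset.sum_nonneg fun j _ => mul_nonneg (abs_nonneg _) (pow_nonneg (hx0 j).le _)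
  have hML : 0 < |μ L| := abs_pos.mpr hμL
  -- transformed zero equation
  have hS : ∀ m, ∑ j, a j * f (p m / q m - x j / q m) = 0 := by
    intro m
    have hq2 : (0:ℝ) < (q m)^2 := by have := hq m; positivity
    have hc : (0:ℝ) < ((q m)^2) ^ ((3:ℝ)/2) := Real.rpow_pos_of_pos hq2 _
    have key : ∀ j : Fin M, a j * q m / ((p m - x j) ^ 2 + q m ^ 2) ^ ((3:ℝ)/2)
        = (q m / ((q m)^2) ^ ((3:ℝ)/2)) * (a j * f (p m / q m - x j / q m)) := by
      intro j
      have hAe : p m / q m - x j / q m = (p m - x j) / q m := by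
        rw [sub_div]
      have hA : (0:ℝ) ≤ 1 + ((p m - x j)/q m)^2 := by have := hq m; positivity
      have e1 : (p m - x j) ^ 2 + q m ^ 2 = (q m)^2 * (1 + ((p m - x j)/q m)^2) := by
        rw [div_pow, mul_add, mul_div_cancel₀ _ (pow_ne_zero 2 (hq m))]
        ring
      have e2 : ((p m - x j) ^ 2 + q m ^ 2) ^ ((3:ℝ)/2)
          = ((q m)^2) ^ ((3:ℝ)/2) * (1 + ((p m - x j)/q m)^2) ^ ((3:ℝ)/2) := by
        rw [e1, Real.mul_rpow (le_of_lt hq2) hA]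
      have hB : (0:ℝ) < (1 + ((p m - x j)/q m)^2) ^ ((3:ℝ)/2) :=
        Real.rpow_pos_of_pos (by positivity) _
      have e3 : f (p m / q m - x j / q m)
          = ((1 + ((p m - x j)/q m)^2) ^ ((3:ℝ)/2))⁻¹ := by
        rw [hAe, hfdef]
        show (1 + ((p m - x j)/q m) ^ 2) ^ (-(3:ℝ)/2) = _
        rw [show (-(3:ℝ)/2) = -((3:ℝ)/2) by ring, Real.rpow_neg hA]
      rw [e2, e3]
      field_simp
    have h0 := hY m
    rw [show (∑ j, a j * q m / ((p m - x j) ^ 2 + q m ^ 2) ^ ((3:ℝ)/2))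
        = (q m / ((q m)^2) ^ ((3:ℝ)/2)) * ∑ j, a j * f (p m / q m - x j / q m) by
          rw [Finset.mul_sum]; exact Finset.sum_congr rfl fun j _ => key j] at h0
    have hne : q m / ((q m)^2) ^ ((3:ℝ)/2) ≠ 0 := div_ne_zero (hq m) (ne_of_gt hc)
    exact (mul_eq_zero.mp h0).resolve_left hne
  -- eventual bound
  have hev : ∀ᶠ m in atTop, |iteratedDeriv L f (p m / q m)| ≤ (C * K / |μ L|) / |q m| := by
    filter_upwards [hqinf.eventually_ge_atTop (1 + ∑ j, x j)] with m hm
    set t : ℝ := p m / q m with htdef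
    have hsx : (0:ℝ) ≤ ∑ j, x j := Finset.sum_nonneg fun j _ => (hx0 j).le
    have hQ1 : (1:ℝ) ≤ |q m| := le_trans (by linarith) hm
    have hQ0 : (0:ℝ) < |q m| := lt_of_lt_of_le one_pos hQ1
    have ht1 : |t| ≤ 1 := le_of_lt (lt_of_lt_of_le (hratio m) (by linarith [hδ.1]))
    have hxj : ∀ j : Fin M, x j ≤ |q m| := fun j =>
      le_trans (le_trans (Finset.single_le_sum (fun i _ => (hx0 i).le) (Finset.mem_univ j))
        (by linarith)) hm
    have habs : ∀ j : Fin M, |x j / q m| = x j / |q m| := fun j => by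
      rw [abs_div, abs_of_pos (hx0 j)]
    have hh1 : ∀ j : Fin M, |x j / q m| ≤ 1 := fun j => by
      rw [habs j, div_le_one hQ0]; exact hxj j
    -- remainder decomposition
    set P : Fin M → ℝ := fun j =>
      ∑ u ∈ Finset.range (L+1), iteratedDeriv u f t * (-(x j / q m))^u / (Nat.factorial u : ℝ) with hP
    have hE : ∀ j : Fin M, |f (t - x j / q m) - P j| ≤ C * |x j / q m|^(L+1) / (Nat.factorial L : ℝ) :=
      fun j => rem_bound hf L C hC t (x j / q m) ht1 (hh1 j)
    -- moment computation
    have inner : ∀ u : ℕ,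
        (∑ j, a j * (iteratedDeriv u f t * (-(x j / q m))^u / (Nat.factorial u : ℝ)))
        = iteratedDeriv u f t * μ u / (q m ^ u * (Nat.factorial u : ℝ)) := by
      intro u
      have hqu : (q m) ^ u ≠ 0 := pow_ne_zero _ (hq m)
      have hfu : ((Nat.factorial u : ℝ)) ≠ 0 := Nat.cast_ne_zero.mpr u.factorial_ne_zero
      have e : ∀ j : Fin M, a j * (iteratedDeriv u f t * (-(x j / q m))^u / (Nat.factorial u : ℝ))
          = iteratedDeriv u f t / (q m ^ u * (Nat.factorial u : ℝ)) * ((-1:ℝ)^u * (a j * x j ^ u)) := by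
        intro j
        rw [neg_pow, div_pow]
        field_simp
      rw [Finset.sum_congr rfl fun j _ => e j, ← Finset.mul_sum, ← Finset.mul_sum, hμdef u]
      ring
    have hPsum : ∑ j, a j * P j
        = iteratedDeriv L f t * μ L / (q m ^ L * (Nat.factorial L : ℝ)) := by
      calc ∑ j, a j * P j
          = ∑ u ∈ Finset.range (L+1), ∑ j, a j *
              (iteratedDeriv u f t * (-(x j / q m))^u / (Nat.factorial u : ℝ)) := by
            simp only [hP, Finset.mul_sum]
            exact Finset.sum_comm
        _ = ∑ u ∈ Finset.range (L+1),
              iteratedDeriv u f t * μ u / (q m ^ u * (Nat.factorial u : ℝ)) :=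
            Finset.sum_congr rfl fun u _ => inner u
        _ = iteratedDeriv L f t * μ L / (q m ^ L * (Nat.factorial L : ℝ)) := by
            refine Finset.sum_eq_single_of_mem L (Finset.self_mem_range_succ L) fun u hu hne => ?_
            rw [hμ0 u (lt_of_le_of_ne (Nat.lt_succ_iff.mp (Finset.mem_range.mp hu)) hne)]
            ring
    have hdecomp : iteratedDeriv L f t * μ L / (q m ^ L * (Nat.factorial L : ℝ))
        + ∑ j, a j * (f (t - x j / q m) - P j) = 0 := by
      rw [← hPsum, ← Finset.sum_add_distrib]
      have e : ∀ j : Fin M, a j * P j + a j * (f (t - x j / q m) - P j)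
          = a j * f (t - x j / q m) := fun j => by ring
      rw [Finset.sum_congr rfl fun j _ => e j]
      exact hS m
    have hF0 : (0:ℝ) < (Nat.factorial L : ℝ) := Nat.cast_pos.mpr L.factorial_pos
    have hRbound : |∑ j, a j * (f (t - x j / q m) - P j)|
        ≤ C * K / ((Nat.factorial L : ℝ) * |q m| ^ (L+1)) := by
      calc |∑ j, a j * (f (t - x j / q m) - P j)|
          ≤ ∑ j, |a j * (f (t - x j / q m) - P j)| := Finset.abs_sum_le_sum_abs _ _
        _ ≤ ∑ j, |a j| * (C * (x j / |q m|)^(L+1) / (Nat.factorial L : ℝ)) := by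
            refine Finset.sum_le_sum fun j _ => ?_
            rw [abs_mul]
            refine mul_le_mul_of_nonneg_left ?_ (abs_nonneg _)
            have h := hE j
            rwa [habs j] at h
        _ = ∑ j, C / ((Nat.factorial L : ℝ) * |q m| ^ (L+1)) * (|a j| * x j ^ (L+1)) := by
            refine Finset.sum_congr rfl fun j _ => ?_
            rw [div_pow]
            have hQne : |q m| ≠ 0 := ne_of_gt hQ0
            have hFne : ((Nat.factorial L : ℝ)) ≠ 0 := ne_of_gt hF0
            field_simp
        _ = C * K / ((Nat.factorial L : ℝ) * |q m| ^ (L+1)) := by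
            rw [← Finset.mul_sum, ← hK]
            ring
    have hAbound : |iteratedDeriv L f t * μ L / (q m ^ L * (Nat.factorial L : ℝ))|
        ≤ C * K / ((Nat.factorial L : ℝ) * |q m| ^ (L+1)) := by
      have e : iteratedDeriv L f t * μ L / (q m ^ L * (Nat.factorial L : ℝ))
          = -(∑ j, a j * (f (t - x j / q m) - P j)) := by linarith [hdecomp]
      rw [e, abs_neg]
      exact hRbound
    have hAeq : |iteratedDeriv L f t * μ L / (q m ^ L * (Nat.factorial L : ℝ))|
        = |iteratedDeriv L f t| * |μ L| / (|q m| ^ L * (Nat.factorial L : ℝ)) := by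
      rw [abs_div, abs_mul, abs_mul, abs_pow, Nat.abs_cast]
    rw [hAeq, div_le_div_iff₀ (by positivity) (by positivity)] at hAbound
    rw [div_div, le_div_iff₀ (by positivity : (0:ℝ) < |μ L| * |q m|)]
    refine le_of_mul_le_mul_right ?_ (by positivity : (0:ℝ) < |q m| ^ L * (Nat.factorial L : ℝ))
    calc |iteratedDeriv L f t| * (|μ L| * |q m|) * (|q m| ^ L * (Nat.factorial L : ℝ))
        = |iteratedDeriv L f t| * |μ L| * ((Nat.factorial L : ℝ) * |q m| ^ (L+1)) := by ring
      _ ≤ C * K * (|q m| ^ L * (Nat.factorial L : ℝ)) := hAbound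
  -- limits
  have hcont : Continuous (iteratedDeriv L f) := hf.continuous_iteratedDeriv L (by exact_mod_cast le_top)
  have h2 : Tendsto (fun m => (C * K / |μ L|) / |q m|) atTop (nhds 0) :=
    tendsto_const_nhds.div_atTop hqinf
  have h3 : Tendsto (fun m => iteratedDeriv L f (p m / q m)) atTop (nhds 0) :=
    squeeze_zero_norm' (hev.mono fun m hm => by simpa [Real.norm_eq_abs] using hm) h2
  have h4 : Tendsto (fun m => iteratedDeriv L f (p m / q m)) atTop
      (nhds (iteratedDeriv L f β)) := (hcont.tendsto β).comp hlim
  exact tendsto_nhds_unique h4 h3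
end
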